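/- arXiv:1204.4251 — 5 statements merged into one kernel-verified Lean document; each statement's English description precedes it below -/
import Mathlib

section
/- For every n ≥ 4, the augmented cube AQ_n is (2n−1)-connected; that is, its vertex connectivity equals 2n−1. -/
/-- Flip the single bit at index `i` (paper bit `i+1`), i.e. the map `X ↦ X_{i+1}`. -/
def flipBit {n : ℕ} (i : Fin n) (X : Fin n → Bool) : Fin n → Bool :=
  fun j => if j = i then !(X j) else X j

/-- Flip all bits at indices `≤ i` (paper bits `i+1, i, …, 1`), i.e. the map `X ↦ X̄_{i+1}`. -/
def flipDown {n : ℕ} (i : Fin n) (X : Fin n → Bool) : Fin n → Bool :=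
  fun j => if j ≤ i then !(X j) else X j

lemma flipBit_flipBit {n : ℕ} (i : Fin n) (X : Fin n → Bool) :
    flipBit i (flipBit i X) = X := by
  funext j; by_cases h : j = i <;> simp [flipBit, h]

lemma flipDown_flipDown {n : ℕ} (i : Fin n) (X : Fin n → Bool) :
    flipDown i (flipDown i X) = X := by
  funext j; by_cases h : j ≤ i <;> simp [flipDown, h]

/-- The augmented cube `AQ_n`: vertices are `n`-bit strings; two distinct vertices `X, Y`
are adjacent iff `Y = X_i` for some `1 ≤ i ≤ n` (a hypercube edge) or `Y = X̄_i` for some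
`2 ≤ i ≤ n` (a complement edge).  Paper bit `i` corresponds to index `i - 1 : Fin n`. -/
def augCube (n : ℕ) : SimpleGraph (Fin n → Bool) where
  Adj X Y := X ≠ Y ∧
    ((∃ i : Fin n, Y = flipBit i X) ∨ (∃ i : Fin n, 1 ≤ i.val ∧ Y = flipDown i X))
  symm := by
    constructor
    rintro X Y ⟨hne, h⟩
    refine ⟨hne.symm, ?_⟩
    rcases h with ⟨i, rfl⟩ | ⟨i, hi, rfl⟩
    · exact Or.inl ⟨i, (flipBit_flipBit i X).symm⟩
    · exact Or.inr ⟨i, hi, (flipDown_flipDown i X).symm⟩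
  loopless := ⟨fun X h => h.1 rfl⟩


/-!
Induction on the dimension. The strings of `AQ_{m+1}` ending in `b` span a copy of `AQ_m`, and the
two copies are joined by the perfect matchings `X b ~ X (!b)` and `X b ~ Xᶜ (!b)`. Delete a set `S`.
If each copy loses at most `2m - 2` vertices, both copies stay connected by induction, and since
`|S| < 2 ^ m` some matching edge `X 0 ~ X 1` survives. Otherwise one copy loses at most one vertex,
so it stays connected, and every surviving vertex of the other copy has two distinct neighbours in
it, one of which survives. The induction starts from `AQ_2 = K_4`; the step from `AQ_3` (which only
survives the deletion of 3 vertices) to `AQ_4` needs a look at the neighbourhoods in `AQ_3`.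
Conversely, the `2n - 1` neighbours of a vertex separate it from any non-neighbour.
-/

namespace SimpleGraph

variable {V : Type*}

/-- Only meaningful for finite `V`: `Set.ncard` of an infinite set is `0`. -/
def PreconnectedAfterDeleting (G : SimpleGraph V) (k : ℕ) : Prop :=
  ∀ S : Set V, S.ncard ≤ k → (G.induce Sᶜ).Preconnected

lemma preconnected_of_pairwise_reachable_of_exists_reachable {G : SimpleGraph V} (p : V → Prop)
    (hcore : ∀ u v, p u → p v → G.Reachable u v)
    (hroute : ∀ u, ¬ p u → ∃ v, p v ∧ G.Reachable u v) : G.Preconnected := by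
  have hreach (u : V) : ∃ v, p v ∧ G.Reachable u v := by
    by_cases hu : p u
    · exact ⟨u, hu, .rfl⟩
    · exact hroute u hu
  intro u w
  obtain ⟨u', hu', huu'⟩ := hreach u
  obtain ⟨w', hw', hww'⟩ := hreach w
  exact huu'.trans ((hcore u' w' hu' hw').trans hww'.symm)

lemma not_preconnected_induce_compl_neighborSet {G : SimpleGraph V} {v w : V} (hvw : v ≠ w)
    (hadj : ¬ G.Adj v w) : ¬ (G.induce (G.neighborSet v)ᶜ).Preconnected := by
  intro h
  obtain ⟨p⟩ := h ⟨v, G.notMem_neighborSet_self⟩ ⟨w, hadj⟩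
  cases p with
  | nil => exact hvw rfl
  | cons hvx _ => exact (Set.notMem_compl_iff.2 hvx) (Subtype.prop _)

end SimpleGraph

namespace AugCube

open Fin

variable {m : ℕ}

lemma flipBit_ne_self (i : Fin m) (X : Fin m → Bool) : flipBit i X ≠ X :=
  fun h => by simpa [flipBit] using congrFun h i

lemma adj_flipBit (i : Fin m) (X : Fin m → Bool) : (augCube m).Adj X (flipBit i X) :=
  ⟨(flipBit_ne_self i X).symm, .inl ⟨i, rfl⟩⟩

lemma adj_flipDown {i : Fin m} (hi : 1 ≤ i.val) (X : Fin m → Bool) :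
    (augCube m).Adj X (flipDown i X) :=
  ⟨fun h => by simpa [flipDown] using congrFun h i, .inr ⟨i, hi, rfl⟩⟩

lemma flipDown_last (X : Fin (m + 1) → Bool) : flipDown (last m) X = Xᶜ := by
  funext j
  simp [flipDown, Fin.le_last]

lemma adj_compl (hm : 1 ≤ m) (X : Fin (m + 1) → Bool) : (augCube (m + 1)).Adj X Xᶜ :=
  flipDown_last X ▸ adj_flipDown (by simpa using hm) X

lemma compl_ne_self (hm : 1 ≤ m) (X : Fin m → Bool) : Xᶜ ≠ X :=
  fun h => by simpa using congrFun h ⟨0, hm⟩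

lemma two_mul_lt_two_pow (hm : 3 ≤ m) : 2 * m < 2 ^ m := by
  induction m, hm using Nat.le_induction with
  | base => norm_num
  | succ m _ ih => rw [pow_succ]; omega

lemma exists_notMem_of_ncard_lt_two_pow {S : Set (Fin m → Bool)} (hS : S.ncard < 2 ^ m) :
    ∃ X, X ∉ S := by
  refine (Set.ne_univ_iff_exists_notMem S).1 fun h => ?_
  simp [h] at hS

lemma neighborSet_eq (X : Fin m → Bool) :
    (augCube m).neighborSet X = Set.range (flipBit · X) ∪ (flipDown · X) '' {i | 1 ≤ i.val} := by
  ext Y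
  constructor
  · rintro ⟨-, ⟨i, rfl⟩ | ⟨i, hi, rfl⟩⟩
    exacts [.inl ⟨i, rfl⟩, .inr ⟨i, hi, rfl⟩]
  · rintro (⟨i, rfl⟩ | ⟨i, hi, rfl⟩)
    exacts [adj_flipBit i X, adj_flipDown hi X]

lemma ncard_setOf_one_le_val : {i : Fin m | 1 ≤ i.val}.ncard = m - 1 := by
  rw [← Set.ncard_image_of_injective _ Fin.val_injective]
  have : Fin.val '' {i : Fin m | 1 ≤ i.val} = Set.Ico 1 m := by
    ext j
    simp only [Set.mem_image, Set.mem_Ico]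
    constructor
    · rintro ⟨i, hi, rfl⟩
      exact ⟨hi, i.2⟩
    · intro h
      exact ⟨⟨j, h.2⟩, h.1, rfl⟩
  rw [this, Set.ncard_eq_toFinset_card']
  simp

lemma ncard_neighborSet (X : Fin m → Bool) : ((augCube m).neighborSet X).ncard = 2 * m - 1 := by
  have hflipBit : Function.Injective (flipBit · X) := fun i j h => by
    by_contra hij
    simpa [flipBit, hij] using congrFun h i
  have hflipDown : Function.Injective (flipDown · X) := fun i j h => by
    have hi := congrFun h i
    have hj := congrFun h j
    simp only [flipDown, le_refl, ite_true] at hi hj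
    exact le_antisymm (by by_contra hij; simp [hij] at hi) (by by_contra hji; simp [hji] at hj)
  have hdisj : Disjoint (Set.range (flipBit · X)) ((flipDown · X) '' {i | 1 ≤ i.val}) := by
    rw [Set.disjoint_left]
    rintro _ ⟨i, rfl⟩ ⟨j, hj, h⟩
    have hji : j = i := by
      by_contra hne
      simpa [flipBit, flipDown, hne] using congrFun h j
    have h0i : (⟨0, i.pos⟩ : Fin m) = i := by
      by_contra hne
      simpa [flipBit, flipDown, hne, Fin.le_def] using congrFun h ⟨0, i.pos⟩
    subst hji
    simp [← h0i] at hj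
  rw [neighborSet_eq, Set.ncard_union_eq hdisj, ← Set.image_univ,
    Set.ncard_image_of_injective _ hflipBit, Set.ncard_image_of_injective _ hflipDown,
    ncard_setOf_one_le_val, Set.ncard_univ, Nat.card_fin]
  omega

lemma flipBit_castSucc_snoc (i : Fin m) (X : Fin m → Bool) (b : Bool) :
    flipBit i.castSucc (snoc X b : Fin (m + 1) → Bool) = snoc (flipBit i X) b := by
  funext j
  refine Fin.lastCases ?_ (fun k => ?_) j
  · simp [flipBit, (castSucc_lt_last i).ne']
  · by_cases hk : k = i <;> simp [flipBit, hk]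

lemma flipDown_castSucc_snoc (i : Fin m) (X : Fin m → Bool) (b : Bool) :
    flipDown i.castSucc (snoc X b : Fin (m + 1) → Bool) = snoc (flipDown i X) b := by
  funext j
  refine Fin.lastCases ?_ (fun k => ?_) j
  · simp [flipDown, (castSucc_lt_last i).not_ge]
  · by_cases hk : k ≤ i <;> simp [flipDown, hk]

lemma flipBit_last_snoc (X : Fin m → Bool) (b : Bool) :
    flipBit (last m) (snoc X b : Fin (m + 1) → Bool) = snoc X (!b) := by
  funext j
  refine Fin.lastCases ?_ (fun k => ?_) j
  · simp [flipBit]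
  · simp [flipBit, (castSucc_lt_last k).ne]

lemma compl_snoc (X : Fin m → Bool) (b : Bool) :
    (snoc X b : Fin (m + 1) → Bool)ᶜ = snoc Xᶜ (!b) := by
  funext j
  refine Fin.lastCases ?_ (fun k => ?_) j <;> simp

def snocHom (b : Bool) : augCube m →g augCube (m + 1) where
  toFun X := snoc X b
  map_rel' := by
    rintro X Y ⟨-, ⟨i, rfl⟩ | ⟨i, hi, rfl⟩⟩
    · rw [← flipBit_castSucc_snoc]
      exact adj_flipBit _ _
    · rw [← flipDown_castSucc_snoc]
      exact adj_flipDown (by simpa using hi) _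

lemma adj_snoc_not (X : Fin m → Bool) (b : Bool) :
    (augCube (m + 1)).Adj (snoc X b) (snoc X (!b)) :=
  flipBit_last_snoc X b ▸ adj_flipBit _ _

lemma adj_snoc_compl (hm : 1 ≤ m) (X : Fin m → Bool) (b : Bool) :
    (augCube (m + 1)).Adj (snoc X b) (snoc Xᶜ (!b)) :=
  compl_snoc X b ▸ adj_compl hm _

def slice (S : Set (Fin (m + 1) → Bool)) (b : Bool) : Set (Fin m → Bool) :=
  (snoc · b) ⁻¹' S

lemma snoc_injective (b : Bool) :
    Function.Injective (snoc · b : (Fin m → Bool) → Fin (m + 1) → Bool) :=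
  fun _ _ h => by simpa using congrArg init h

lemma snoc_init_of_last_eq {u : Fin (m + 1) → Bool} {b : Bool} (h : u (last m) = b) :
    (snoc (init u) b : Fin (m + 1) → Bool) = u := by
  rw [← h, snoc_init_self]

lemma ncard_slice (S : Set (Fin (m + 1) → Bool)) (b : Bool) :
    (slice S b).ncard = (S ∩ {u | u (last m) = b}).ncard := by
  have : slice S b = (snoc · b) ⁻¹' (S ∩ {u | u (last m) = b}) := by ext; simp [slice]
  rw [this]
  refine Set.ncard_preimage_of_injective_subset_range (snoc_injective b) ?_
  rintro u ⟨-, hu⟩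
  exact ⟨init u, snoc_init_of_last_eq hu⟩

lemma ncard_slice_add_ncard_slice_not (S : Set (Fin (m + 1) → Bool)) (b : Bool) :
    (slice S b).ncard + (slice S (!b)).ncard = S.ncard := by
  rw [ncard_slice, ncard_slice, ← Set.ncard_inter_add_ncard_sdiff_eq_ncard S {u | u (last m) = b},
    Set.sdiff_eq]
  congr 3
  ext u
  exact Bool.eq_not

lemma exists_notMem_slices {S : Set (Fin (m + 1) → Bool)} (hS : S.ncard < 2 ^ m) :
    ∃ X, X ∉ slice S false ∧ X ∉ slice S true := by
  have hsum := ncard_slice_add_ncard_slice_not S false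
  obtain ⟨X, hX⟩ := exists_notMem_of_ncard_lt_two_pow
    ((Set.ncard_union_le (slice S false) (slice S true)).trans_lt (hsum ▸ hS))
  exact ⟨X, not_or.1 hX⟩

def liftSlice (S : Set (Fin (m + 1) → Bool)) (b : Bool) :
    (augCube m).induce (slice S b)ᶜ →g (augCube (m + 1)).induce Sᶜ :=
  SimpleGraph.induceHom (snocHom b) fun _ hX => hX

lemma exists_liftSlice_eq (S : Set (Fin (m + 1) → Bool)) {b : Bool} (u : ↥Sᶜ)
    (hu : u.1 (last m) = b) : ∃ X, liftSlice S b X = u := by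
  refine ⟨⟨init u.1, ?_⟩, Subtype.ext (snoc_init_of_last_eq hu)⟩
  change snoc (init u.1) b ∉ S
  rw [snoc_init_of_last_eq hu]
  exact u.2

lemma reachable_of_preconnected_slice {S : Set (Fin (m + 1) → Bool)} {b : Bool}
    (hb : ((augCube m).induce (slice S b)ᶜ).Preconnected) {u v : ↥Sᶜ}
    (hu : u.1 (last m) = b) (hv : v.1 (last m) = b) :
    ((augCube (m + 1)).induce Sᶜ).Reachable u v := by
  obtain ⟨X, rfl⟩ := exists_liftSlice_eq S u hu
  obtain ⟨Y, rfl⟩ := exists_liftSlice_eq S v hv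
  exact (hb X Y).map _

lemma preconnected_of_preconnected_slice {S : Set (Fin (m + 1) → Bool)} {a : Bool}
    (hlight : ((augCube m).induce (slice S (!a))ᶜ).Preconnected)
    (hroute : ∀ X : ↥(slice S a)ᶜ,
      ∃ v : ↥Sᶜ, v.1 (last m) = !a ∧ ((augCube (m + 1)).induce Sᶜ).Reachable (liftSlice S a X) v) :
    ((augCube (m + 1)).induce Sᶜ).Preconnected := by
  refine SimpleGraph.preconnected_of_pairwise_reachable_of_exists_reachable
    (fun u => u.1 (last m) = !a) (fun _ _ hu hv => reachable_of_preconnected_slice hlight hu hv)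
    fun u hu => ?_
  obtain ⟨X, rfl⟩ := exists_liftSlice_eq S u (by simpa using hu)
  exact hroute X

lemma preconnected_of_preconnected_slices {S : Set (Fin (m + 1) → Bool)}
    (hfalse : ((augCube m).induce (slice S false)ᶜ).Preconnected)
    (htrue : ((augCube m).induce (slice S true)ᶜ).Preconnected) (hS : S.ncard < 2 ^ m) :
    ((augCube (m + 1)).induce Sᶜ).Preconnected := by
  obtain ⟨Z, hZfalse, hZtrue⟩ := exists_notMem_slices hS
  refine preconnected_of_preconnected_slice (a := true) hfalse fun X => ?_
  have hcross : ((augCube (m + 1)).induce Sᶜ).Adj ⟨snoc Z true, hZtrue⟩ ⟨snoc Z false, hZfalse⟩ :=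
    adj_snoc_not Z true
  exact ⟨_, by simp, ((htrue X ⟨Z, hZtrue⟩).map _).trans hcross.reachable⟩

lemma exists_adj_of_notMem_slice (hm : 1 ≤ m) {S : Set (Fin (m + 1) → Bool)} {a : Bool}
    (X : ↥(slice S a)ᶜ) (h : X.1 ∉ slice S (!a) ∨ X.1ᶜ ∉ slice S (!a)) :
    ∃ v : ↥Sᶜ, v.1 (last m) = !a ∧ ((augCube (m + 1)).induce Sᶜ).Adj (liftSlice S a X) v := by
  rcases h with h | h
  · exact ⟨⟨_, h⟩, by simp, adj_snoc_not X.1 a⟩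
  · exact ⟨⟨_, h⟩, by simp, adj_snoc_compl hm X.1 a⟩

theorem preconnectedAfterDeleting_succ {k K : ℕ} (hm : 1 ≤ m) (hk : 1 ≤ k) (hKk : K ≤ k + 2)
    (hK : K < 2 ^ m) (h : (augCube m).PreconnectedAfterDeleting k) :
    (augCube (m + 1)).PreconnectedAfterDeleting K := by
  intro S hS
  by_cases hheavy : ∃ a, k < (slice S a).ncard
  · obtain ⟨a, ha⟩ := hheavy
    have hlight : (slice S (!a)).ncard ≤ 1 := by
      have := ncard_slice_add_ncard_slice_not S a
      omega
    refine preconnected_of_preconnected_slice (h _ (hlight.trans hk)) fun X => ?_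
    have hnot : X.1 ∉ slice S (!a) ∨ X.1ᶜ ∉ slice S (!a) := by
      by_contra! hboth
      exact compl_ne_self hm _ ((Set.ncard_le_one (Set.toFinite _)).1 hlight _ hboth.2 _ hboth.1)
    obtain ⟨v, hv, hXv⟩ := exists_adj_of_notMem_slice hm X hnot
    exact ⟨v, hv, hXv.reachable⟩
  · push Not at hheavy
    exact preconnected_of_preconnected_slices (h _ (hheavy false)) (h _ (hheavy true)) (by omega)

lemma adj_of_ne_of_two {X Y : Fin 2 → Bool} (h : X ≠ Y) : (augCube 2).Adj X Y := by
  refine ⟨h, ?_⟩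
  revert X Y
  decide

theorem preconnectedAfterDeleting_two (k : ℕ) : (augCube 2).PreconnectedAfterDeleting k := by
  intro S _ u v
  by_cases huv : u = v
  · exact huv ▸ .rfl
  · exact SimpleGraph.Adj.reachable (G := (augCube 2).induce Sᶜ)
      (adj_of_ne_of_two fun h => huv (Subtype.ext h))

def nonComplNeighbors (X : Fin 3 → Bool) : Finset (Fin 3 → Bool) :=
  {flipBit 0 X, flipBit 1 X, flipBit 2 X, flipDown 1 X}

lemma compl_notMem_nonComplNeighbors (X : Fin 3 → Bool) : Xᶜ ∉ nonComplNeighbors X := by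
  revert X
  decide

lemma card_insert_compl_nonComplNeighbors (X : Fin 3 → Bool) :
    (insert Xᶜ (nonComplNeighbors X)).card = 5 := by
  revert X
  decide

lemma card_insert_flipBit_compl_nonComplNeighbors (X : Fin 3 → Bool) :
    (insert (flipBit 0 Xᶜ) (nonComplNeighbors X)).card = 5 := by
  revert X
  decide

lemma flipBit_zero_compl_ne (X : Fin 3 → Bool) : flipBit 0 Xᶜ ≠ X := by
  revert X
  decide

lemma exists_reachable_of_ncard_le_four {D : Set (Fin 3 → Bool)} (hD : D.ncard ≤ 4) (X : ↥Dᶜ) :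
    ∃ Y : ↥Dᶜ, Y.1 ≠ X.1 ∧ Y.1 ≠ X.1ᶜ ∧ ((augCube 3).induce Dᶜ).Reachable X Y := by
  obtain ⟨X, hX⟩ := X
  by_cases hN : ∃ Y ∈ nonComplNeighbors X, Y ∉ D
  · obtain ⟨Y, hYN, hYD⟩ := hN
    have hXY : (augCube 3).Adj X Y := by
      simp only [nonComplNeighbors, Finset.mem_insert, Finset.mem_singleton] at hYN
      rcases hYN with rfl | rfl | rfl | rfl
      exacts [adj_flipBit _ _, adj_flipBit _ _, adj_flipBit _ _, adj_flipDown (by decide) _]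
    exact ⟨⟨Y, hYD⟩, hXY.ne.symm, fun h => compl_notMem_nonComplNeighbors X (h ▸ hYN),
      SimpleGraph.Adj.reachable (G := (augCube 3).induce Dᶜ) hXY⟩
  push Not at hN
  -- `D` is then exactly `nonComplNeighbors X`, and the path `X ~ Xᶜ ~ flipBit 0 Xᶜ` avoids it.
  have hnotMem {Z : Fin 3 → Bool} (hZ : (insert Z (nonComplNeighbors X)).card = 5) : Z ∉ D := by
    intro hZD
    have hsub : (↑(insert Z (nonComplNeighbors X)) : Set (Fin 3 → Bool)) ⊆ D := by
      rw [Finset.coe_insert, Set.insert_subset_iff]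
      exact ⟨hZD, fun Y hY => hN Y hY⟩
    have := Set.ncard_le_ncard hsub
    rw [Set.ncard_coe_finset] at this
    omega
  have hXXc : ((augCube 3).induce Dᶜ).Adj ⟨X, hX⟩
      ⟨Xᶜ, hnotMem (card_insert_compl_nonComplNeighbors X)⟩ :=
    adj_compl (by decide) X
  have hXcY : ((augCube 3).induce Dᶜ).Adj ⟨Xᶜ, hnotMem (card_insert_compl_nonComplNeighbors X)⟩
      ⟨flipBit 0 Xᶜ, hnotMem (card_insert_flipBit_compl_nonComplNeighbors X)⟩ :=
    adj_flipBit 0 Xᶜ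
  exact ⟨_, flipBit_zero_compl_ne X, flipBit_ne_self 0 Xᶜ, hXXc.reachable.trans hXcY.reachable⟩

lemma exists_reachable_of_ncard_le_six {S : Set (Fin 4 → Bool)} (hS : S.ncard ≤ 6) {a : Bool}
    (hlight : (slice S (!a)).ncard ≤ 2) (X : ↥(slice S a)ᶜ) :
    ∃ v : ↥Sᶜ, v.1 (last 3) = !a ∧ ((augCube 4).induce Sᶜ).Reachable (liftSlice S a X) v := by
  by_cases hcross : X.1 ∉ slice S (!a) ∨ X.1ᶜ ∉ slice S (!a)
  · obtain ⟨v, hv, hXv⟩ := exists_adj_of_notMem_slice (by decide) X hcross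
    exact ⟨v, hv, hXv.reachable⟩
  push Not at hcross
  have hne := (compl_ne_self (by decide) X.1).symm
  have hpair : slice S (!a) = {X.1, X.1ᶜ} := by
    refine (Set.eq_of_subset_of_ncard_le ?_ ?_).symm
    · simpa [Set.insert_subset_iff] using hcross
    · rw [Set.ncard_pair hne]
      exact hlight
  have hheavy : (slice S a).ncard ≤ 4 := by
    have := ncard_slice_add_ncard_slice_not S a
    rw [hpair, Set.ncard_pair hne] at this
    omega
  obtain ⟨Y, hYX, hYXc, hXY⟩ := exists_reachable_of_ncard_le_four hheavy X
  obtain ⟨v, hv, hYv⟩ :=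
    exists_adj_of_notMem_slice (by decide) Y (.inl (by simp [hpair, hYX, hYXc]))
  exact ⟨v, hv, (hXY.map _).trans hYv.reachable⟩

theorem preconnectedAfterDeleting_four (h : (augCube 3).PreconnectedAfterDeleting 3) :
    (augCube 4).PreconnectedAfterDeleting 6 := by
  intro S hS
  by_cases hheavy : ∃ a, 3 < (slice S a).ncard
  · obtain ⟨a, ha⟩ := hheavy
    have hlight : (slice S (!a)).ncard ≤ 2 := by
      have := ncard_slice_add_ncard_slice_not S a
      omega
    exact preconnected_of_preconnected_slice (h _ (by omega))
      (exists_reachable_of_ncard_le_six hS hlight)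
  · push Not at hheavy
    exact preconnected_of_preconnected_slices (h _ (hheavy false)) (h _ (hheavy true))
      (by norm_num; omega)

theorem preconnectedAfterDeleting_two_mul_sub_two (hm : 4 ≤ m) :
    (augCube m).PreconnectedAfterDeleting (2 * m - 2) := by
  induction m, hm using Nat.le_induction with
  | base =>
    exact preconnectedAfterDeleting_four <| preconnectedAfterDeleting_succ (m := 2) (k := 4)
      (by norm_num) (by norm_num) (by norm_num) (by norm_num) (preconnectedAfterDeleting_two 4)
  | succ m hm ih =>
    have := two_mul_lt_two_pow (m := m) (by omega)
    exact preconnectedAfterDeleting_succ (by omega) (by omega) (by omega) (by omega) ih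

end AugCube

/-- For every `n ≥ 4`, the vertex connectivity of `AQ_n` is `2n - 1`: the minimum
cardinality of a set `S` of vertices such that `AQ_n - S` is disconnected equals `2n - 1`. -/
theorem augCube_connectivity (n : ℕ) (hn : 4 ≤ n) :
    IsLeast {k : ℕ | ∃ S : Set (Fin n → Bool),
      S.ncard = k ∧ ¬ ((augCube n).induce Sᶜ).Connected} (2 * n - 1) := by
  have hfew {S : Set (Fin n → Bool)} (hS : S.ncard ≤ 2 * n) : ∃ X, X ∉ S :=
    AugCube.exists_notMem_of_ncard_lt_two_pow
      (hS.trans_lt (AugCube.two_mul_lt_two_pow (by omega)))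
  constructor
  · let X : Fin n → Bool := fun _ => false
    obtain ⟨Y, hY⟩ := hfew (S := insert X ((augCube n).neighborSet X))
      ((Set.ncard_insert_le _ _).trans (by rw [AugCube.ncard_neighborSet]; omega))
    rw [Set.mem_insert_iff, not_or] at hY
    exact ⟨_, AugCube.ncard_neighborSet X, fun h =>
      SimpleGraph.not_preconnected_induce_compl_neighborSet (Ne.symm hY.1) hY.2 h.preconnected⟩
  · rintro k ⟨S, rfl, hS⟩
    by_contra! hlt
    obtain ⟨X, hX⟩ := hfew (S := S) (by omega)
    have : Nonempty ↥Sᶜ := ⟨⟨X, hX⟩⟩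
    exact hS ⟨AugCube.preconnectedAfterDeleting_two_mul_sub_two hn S (by omega)⟩
end

section
/- For every n ≥ 2, the 1-extra edge-connectivity of the augmented cube satisfies λ_1(AQ_n) = 4n − 4; that is, the minimum cardinality of a set F of edges of AQ_n such that AQ_n − F is disconnected and every connected component of AQ_n − F has more than one vertex equals 4n − 4. -/
/-!
For the lower bound, the component `S` of `AQ_n - F` containing a fixed vertex and its
complement both have at least two vertices, and every edge of `AQ_n` between them lies in `F`;
so it suffices that every `S` with `2 ≤ |S| ≤ 2^(n-1)` has at least `4n - 4` boundary edges.
Splitting on the last bit, `AQ_(m+1)` consists of two copies of `AQ_m` joined by the edges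
`(w0, w1)` and `(w0, w̄1)`. Hence the boundary of `S` is at least the sum of the boundaries of
its two slices `S₀, S₁` in the copies, plus `2 | |S₀| - |S₁| |` cross edges. An induction on `m`
with this recursion proves both the edge connectivity `2n - 1` of `AQ_n` and the bound `4n - 4`;
the base cases are handled by regularity: `AQ_1 = K_2`, `AQ_2 = K_4`, and a two-vertex set
has `2 (2n - 1) - 2` boundary edges.

For the upper bound, deleting the `4n - 4` edges that meet an edge `XY` of `AQ_n`, other than
`XY` itself, leaves `{X, Y}` as a component, while every other vertex keeps its neighbour
across the first bit.
-/

open Finset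

namespace SimpleGraph

variable {V : Type*} (G : SimpleGraph V) [DecidableRel G.Adj]

lemma card_interedges_eq_sum (s t : Finset V) :
    #(G.interedges s t) = ∑ x ∈ s, ∑ y ∈ t, if G.Adj x y then 1 else 0 := by
  rw [interedges_def, card_filter, sum_product]

variable [Fintype V] [DecidableEq V]

lemma card_interedges_compl_comm (S : Finset V) :
    #(G.interedges Sᶜ Sᶜᶜ) = #(G.interedges S Sᶜ) := by
  have : Std.Symm G.Adj := ⟨fun _ _ h => h.symm⟩
  rw [compl_compl]
  exact Rel.card_interedges_comm _ _

lemma IsRegularOfDegree.card_mul_le_card_interedges_compl_add {G : SimpleGraph V}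
    [DecidableRel G.Adj] {d : ℕ} (hG : G.IsRegularOfDegree d) (S : Finset V) :
    #S * d ≤ #(G.interedges S Sᶜ) + #S * (#S - 1) := by
  have hdeg : #(G.interedges S univ) = #S * d := by
    rw [card_interedges_eq_sum, ← smul_eq_mul, ← sum_const]
    refine sum_congr rfl fun x _ => ?_
    rw [← card_filter, ← hG x, ← card_neighborFinset_eq_degree, neighborFinset_eq_filter]
  have hsplit : G.interedges S univ = G.interedges S S ∪ G.interedges S Sᶜ := by
    ext p
    simp only [mem_interedges_iff, mem_union, mem_univ, mem_compl]
    tauto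
  have hinner : #(G.interedges S S) ≤ #S * (#S - 1) := by
    calc #(G.interedges S S) ≤ #S.offDiag := card_le_card fun p hp => by
          rw [mem_interedges_iff] at hp
          exact mem_offDiag.2 ⟨hp.1, hp.2.1, hp.2.2.ne⟩
      _ = #S * (#S - 1) := by rw [offDiag_card, Nat.mul_sub_one]
  rw [hsplit, card_union_of_disjoint (G.interedges_disjoint_right S disjoint_compl_right)] at hdeg
  omega

lemma card_interedges_compl_le_ncard {F : Set (Sym2 V)} {S : Finset V}
    (hS : ∀ x ∈ S, ∀ y ∉ S, G.Adj x y → s(x, y) ∈ F) :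
    #(G.interedges S Sᶜ) ≤ F.ncard := by
  rw [← Set.ncard_coe_finset]
  refine Set.ncard_le_ncard_of_injOn (fun p => s(p.1, p.2)) (fun p hp => ?_)
    (fun p hp q hq h => ?_) F.toFinite
  · rw [mem_coe, mem_interedges_iff, mem_compl] at hp
    exact hS _ hp.1 _ hp.2.1 hp.2.2
  · rw [mem_coe, mem_interedges_iff, mem_compl] at hp hq
    rcases Sym2.eq_iff.1 h with ⟨h1, h2⟩ | ⟨h1, -⟩
    · exact Prod.ext h1 h2
    · exact absurd (h1 ▸ hp.1) hq.2.1

lemma le_ncard_of_le_card_interedges [Nonempty V] {k : ℕ}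
    (hcut : ∀ S : Finset V, 2 ≤ #S → 2 * #S ≤ Fintype.card V → k ≤ #(G.interedges S Sᶜ))
    {F : Set (Sym2 V)} (hdisc : ¬ (G.deleteEdges F).Connected)
    (hcomp : ∀ c : (G.deleteEdges F).ConnectedComponent, 1 < c.supp.ncard) :
    k ≤ F.ncard := by
  classical
  set G' := G.deleteEdges F
  have two_le_card (c : G'.ConnectedComponent) : 2 ≤ #{x | G'.connectedComponentMk x = c} := by
    have := hcomp c
    rwa [← Set.ncard_coe_finset, coe_filter_univ]
  obtain ⟨v⟩ := ‹Nonempty V›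
  set S : Finset V := {x | G'.connectedComponentMk x = G'.connectedComponentMk v}
  have hS : ∀ x ∈ S, ∀ y ∉ S, G.Adj x y → s(x, y) ∈ F := by
    intro x hx y hy hxy
    by_contra hF
    simp only [S, mem_filter_univ] at hx hy
    exact hy (ConnectedComponent.sound (deleteEdges_adj.2 ⟨hxy, hF⟩).symm.reachable |>.trans hx)
  obtain ⟨u, hu⟩ : ∃ u, u ∉ S := by
    by_contra! h
    refine hdisc ⟨fun x y => ConnectedComponent.exact ?_⟩
    simp only [S, mem_filter_univ] at h
    rw [h x, h y]
  have hSc : 2 ≤ #Sᶜ := (two_le_card (G'.connectedComponentMk u)).trans <|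
    card_le_card fun x hx => by
      simp only [S, mem_filter_univ, mem_compl] at hx hu ⊢
      rwa [hx]
  have hcard := card_add_card_compl S
  rcases le_total (2 * #S) (Fintype.card V) with h | h
  · exact (hcut S (two_le_card _) h).trans (G.card_interedges_compl_le_ncard hS)
  · calc k ≤ #(G.interedges Sᶜ Sᶜᶜ) := hcut Sᶜ hSc (by omega)
      _ ≤ F.ncard := by
        rw [card_interedges_compl_comm]
        exact G.card_interedges_compl_le_ncard hS

lemma exists_isolating_edge_cut {u v : V} (huv : G.Adj u v) {z : V} (hzu : z ≠ u) (hzv : z ≠ v)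
    (hnbr : ∀ w, w ≠ u → w ≠ v → ∃ w', G.Adj w w' ∧ w' ≠ u ∧ w' ≠ v) :
    ∃ F : Set (Sym2 V), F ⊆ G.edgeSet ∧ F.ncard = G.degree u + G.degree v - 2 ∧
      ¬ (G.deleteEdges F).Connected ∧
      ∀ c : (G.deleteEdges F).ConnectedComponent, 1 < c.supp.ncard := by
  set F := (G.incidenceFinset u ∪ G.incidenceFinset v).erase s(u, v)
  have mem_F {x y : V} : s(x, y) ∈ F ↔
      s(x, y) ≠ s(u, v) ∧ G.Adj x y ∧ (u = x ∨ u = y ∨ v = x ∨ v = y) := by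
    simp only [F, mem_erase, mem_union, mem_incidenceFinset, mk'_mem_incidenceSet_iff]
    tauto
  set G' := G.deleteEdges (F : Set (Sym2 V))
  have huv' : G'.Adj u v := deleteEdges_adj.2 ⟨huv, by simp [mem_F]⟩
  refine ⟨F, fun e he => ?_, ?_, fun hcon => ?_, fun c => ?_⟩
  · induction e using Sym2.ind
    exact (mem_F.1 he).2.1
  · have hinter : G.incidenceFinset u ∩ G.incidenceFinset v = {s(u, v)} := by
      rw [← coe_inj, coe_inter]
      simpa using G.incidenceSet_inter_incidenceSet_of_adj huv
    have := card_union_add_card_inter (G.incidenceFinset u) (G.incidenceFinset v)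
    rw [hinter, card_singleton, card_incidenceFinset_eq_degree,
      card_incidenceFinset_eq_degree] at this
    rw [Set.ncard_coe_finset, card_erase_of_mem (mem_union_left _ (by simp [incidenceFinset, huv]))]
    omega
  · obtain ⟨p⟩ := hcon.preconnected u z
    obtain ⟨⟨⟨x, y⟩, hxy⟩, -, hx, hy⟩ :=
      p.exists_boundary_dart {u, v} (by simp) (by simp [hzu, hzv])
    simp only [Set.mem_insert_iff, Set.mem_singleton_iff] at hx hy
    rw [deleteEdges_adj, mem_coe, mem_F] at hxy
    refine hxy.2 ⟨fun h => ?_, hxy.1, by tauto⟩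
    rcases Sym2.eq_iff.1 h with ⟨-, h⟩ | ⟨-, h⟩ <;> tauto
  · rw [Set.one_lt_ncard_iff]
    induction c using ConnectedComponent.ind with | h x => ?_
    simp only [ConnectedComponent.mem_supp_iff, ConnectedComponent.eq]
    by_cases hx : x = u ∨ x = v
    · refine ⟨u, v, ?_, ?_, huv.ne⟩ <;> rcases hx with rfl | rfl
      all_goals first | exact .refl _ | exact huv'.reachable | exact huv'.reachable.symm
    · rw [not_or] at hx
      obtain ⟨y, hxy, hy⟩ := hnbr x hx.1 hx.2
      refine ⟨x, y, .refl _, (deleteEdges_adj.2 ⟨hxy, ?_⟩).reachable.symm, hxy.ne⟩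
      rw [mem_coe, mem_F]
      tauto

end SimpleGraph

open SimpleGraph

lemma Fin.card_filter_one_le_val (n : ℕ) : #{i : Fin n | 1 ≤ i.val} = n - 1 := by
  have := card_filter_add_card_filter_not (s := univ) fun i : Fin n => i.val < 1
  simp only [Fin.card_filter_val_lt, not_lt, card_univ, Fintype.card_fin] at this
  omega

instance (n : ℕ) : DecidableRel (augCube n).Adj := fun X Y =>
  inferInstanceAs (Decidable (X ≠ Y ∧ _))

lemma flipBit_ne {n : ℕ} (i : Fin n) (X : Fin n → Bool) : flipBit i X ≠ X := fun h => by
  simpa [flipBit] using congrFun h i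

lemma flipDown_ne {n : ℕ} (i : Fin n) (X : Fin n → Bool) : flipDown i X ≠ X := fun h => by
  simpa [flipDown, Fin.lt_def] using congrFun h ⟨0, i.pos⟩

lemma flipBit_injective {n : ℕ} (X : Fin n → Bool) : Function.Injective (flipBit · X) := by
  intro i j h
  by_contra hij
  simpa [flipBit, hij] using congrFun h i

lemma flipDown_injective {n : ℕ} (X : Fin n → Bool) : Function.Injective (flipDown · X) := by
  intro i j h
  wlog hij : i < j generalizing i j
  · exact (lt_or_eq_of_le (not_lt.1 hij)).elim (fun h' => (this h.symm h').symm) Eq.symm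
  simpa [flipDown, not_le.2 hij] using congrFun h j

lemma flipBit_ne_flipDown {n : ℕ} {i j : Fin n} (hj : 1 ≤ j.val) (X : Fin n → Bool) :
    flipBit i X ≠ flipDown j X := by
  intro h
  by_cases hi : i.val = 0
  · have : j ≠ i := fun h' => by omega
    simpa [flipBit, flipDown, this] using congrFun h j
  · have : (⟨0, j.pos⟩ : Fin n) ≠ i := fun h' => hi (by rw [← h'])
    simpa [flipBit, flipDown, this, Fin.le_def] using congrFun h ⟨0, j.pos⟩

lemma augCube_adj_iff {n : ℕ} {X Y : Fin n → Bool} : (augCube n).Adj X Y ↔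
    (∃ i : Fin n, Y = flipBit i X) ∨ (∃ i : Fin n, 1 ≤ i.val ∧ Y = flipDown i X) := by
  refine ⟨And.right, fun h => ⟨?_, h⟩⟩
  rintro rfl
  rcases h with ⟨i, hi⟩ | ⟨i, -, hi⟩
  exacts [flipBit_ne i X hi.symm, flipDown_ne i X hi.symm]

lemma augCube_degree (n : ℕ) (X : Fin n → Bool) : (augCube n).degree X = 2 * n - 1 := by
  have hnbr : (augCube n).neighborFinset X = univ.image (flipBit · X) ∪
      (univ.filter fun i : Fin n => 1 ≤ i.val).image (flipDown · X) := by
    ext Y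
    simp [augCube_adj_iff, eq_comm]
  rw [← card_neighborFinset_eq_degree, hnbr, card_union_of_disjoint,
    card_image_of_injective _ (flipBit_injective X),
    card_image_of_injective _ (flipDown_injective X), Fin.card_filter_one_le_val, card_univ,
    Fintype.card_fin]
  · omega
  · simp only [Finset.disjoint_left, mem_image, mem_univ, true_and, mem_filter]
    rintro _ ⟨i, rfl⟩ ⟨j, hj, h⟩
    exact flipBit_ne_flipDown hj X h.symm

lemma augCube_isRegularOfDegree (n : ℕ) : (augCube n).IsRegularOfDegree (2 * n - 1) :=
  augCube_degree n

section LastBit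

variable {m : ℕ}

lemma flipBit_castSucc_snoc (j : Fin m) (w : Fin m → Bool) (b : Bool) :
    flipBit j.castSucc (Fin.snoc w b : Fin (m + 1) → Bool) = Fin.snoc (flipBit j w) b := by
  funext k
  induction k using Fin.lastCases <;> simp [flipBit, Fin.snoc, (Fin.castSucc_lt_last j).ne']

lemma flipDown_castSucc_snoc (j : Fin m) (w : Fin m → Bool) (b : Bool) :
    flipDown j.castSucc (Fin.snoc w b : Fin (m + 1) → Bool) = Fin.snoc (flipDown j w) b := by
  funext k
  induction k using Fin.lastCases <;> simp [flipDown, Fin.snoc]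

lemma flipBit_last_snoc (w : Fin m → Bool) (b : Bool) :
    flipBit (Fin.last m) (Fin.snoc w b : Fin (m + 1) → Bool) = Fin.snoc w (!b) := by
  funext k
  induction k using Fin.lastCases <;> simp [flipBit, Fin.snoc, (Fin.castSucc_lt_last _).ne]

lemma flipDown_last_snoc (w : Fin m → Bool) (b : Bool) :
    flipDown (Fin.last m) (Fin.snoc w b : Fin (m + 1) → Bool) = Fin.snoc wᶜ (!b) := by
  funext k
  induction k using Fin.lastCases <;> simp [flipDown, Fin.snoc, (Fin.castSucc_lt_last _).le]

lemma augCube_adj_snoc (hm : 1 ≤ m) (w w' : Fin m → Bool) (b b' : Bool) :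
    (augCube (m + 1)).Adj (Fin.snoc w b) (Fin.snoc w' b') ↔
      if b' = b then (augCube m).Adj w w' else w' = w ∨ w' = wᶜ := by
  rw [augCube_adj_iff, augCube_adj_iff]
  split_ifs with hb
  · subst hb
    constructor
    · rintro (⟨i, hi⟩ | ⟨i, hi1, hi⟩)
      · induction i using Fin.lastCases with
        | last => simp [flipBit_last_snoc] at hi
        | cast j =>
          rw [flipBit_castSucc_snoc, Fin.snoc_inj] at hi
          exact Or.inl ⟨j, hi.1⟩
      · induction i using Fin.lastCases with
        | last => simp [flipDown_last_snoc] at hi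
        | cast j =>
          rw [flipDown_castSucc_snoc, Fin.snoc_inj] at hi
          exact Or.inr ⟨j, hi1, hi.1⟩
    · rintro (⟨j, rfl⟩ | ⟨j, hj, rfl⟩)
      · exact Or.inl ⟨j.castSucc, (flipBit_castSucc_snoc j w b').symm⟩
      · exact Or.inr ⟨j.castSucc, hj, (flipDown_castSucc_snoc j w b').symm⟩
  · obtain rfl : b' = !b := by cases b <;> cases b' <;> simp_all
    constructor
    · rintro (⟨i, hi⟩ | ⟨i, -, hi⟩) <;> induction i using Fin.lastCases with
      | last => simp_all [flipBit_last_snoc, flipDown_last_snoc]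
      | cast j => simp [flipBit_castSucc_snoc, flipDown_castSucc_snoc] at hi
    · rintro (h | h) <;> rw [h]
      · exact Or.inl ⟨Fin.last m, (flipBit_last_snoc w b).symm⟩
      · exact Or.inr ⟨Fin.last m, hm, (flipDown_last_snoc w b).symm⟩

def lastSlice (S : Finset (Fin (m + 1) → Bool)) (b : Bool) : Finset (Fin m → Bool) :=
  {w | Fin.snoc w b ∈ S}

@[simp]
lemma mem_lastSlice {S : Finset (Fin (m + 1) → Bool)} {b : Bool} {w : Fin m → Bool} :
    w ∈ lastSlice S b ↔ Fin.snoc w b ∈ S := by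
  simp [lastSlice]

lemma lastSlice_compl (S : Finset (Fin (m + 1) → Bool)) (b : Bool) :
    lastSlice Sᶜ b = (lastSlice S b)ᶜ := by
  ext; simp

lemma sum_eq_sum_lastSlice {M : Type*} [AddCommMonoid M] (S : Finset (Fin (m + 1) → Bool))
    (f : (Fin (m + 1) → Bool) → M) :
    ∑ x ∈ S, f x = ∑ w ∈ lastSlice S false, f (Fin.snoc w false) +
      ∑ w ∈ lastSlice S true, f (Fin.snoc w true) := by
  rw [← univ_inter S, ← sum_ite_mem]
  simp only [lastSlice, sum_filter, univ_inter]
  rw [← (Fin.snocEquiv fun _ => Bool).sum_comp, Fintype.sum_prod_type, Fintype.sum_bool, add_comm]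
  rfl

lemma card_eq_card_lastSlice_add (S : Finset (Fin (m + 1) → Bool)) :
    #S = #(lastSlice S false) + #(lastSlice S true) := by
  simp only [card_eq_sum_ones, sum_eq_sum_lastSlice S]

lemma two_mul_sub_le_sum_cross (hm : 1 ≤ m) (A B : Finset (Fin m → Bool)) :
    2 * (#A - #B) ≤ ∑ w ∈ A, ∑ w' ∈ Bᶜ, if w' = w ∨ w' = wᶜ then 1 else 0 := by
  have hsplit (w w' : Fin m → Bool) : (if w' = w ∨ w' = wᶜ then 1 else 0) =
      (if w' = w then 1 else 0) + (if w' = wᶜ then 1 else 0) := by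
    have : Nonempty (Fin m) := ⟨⟨0, hm⟩⟩
    have : w ≠ wᶜ := ne_compl_self
    split_ifs <;> simp_all
  have hsame : #A - #B ≤ ∑ w ∈ A, if w ∈ Bᶜ then 1 else 0 := by
    rw [← card_filter, filter_mem_eq_inter, ← sdiff_eq_inter_compl]
    exact le_card_sdiff B A
  have hcompl : #A - #B ≤ ∑ w ∈ A, if wᶜ ∈ Bᶜ then 1 else 0 := by
    rw [← card_filter]
    have h1 := card_filter_add_card_filter_not (s := A) fun w => wᶜ ∈ Bᶜ
    have h2 : #{w ∈ A | ¬ wᶜ ∈ Bᶜ} ≤ #B := card_le_card_of_injOn (·ᶜ)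
      (fun w hw => by simpa using (mem_filter.1 hw).2) compl_injective.injOn
    omega
  simp only [hsplit, sum_add_distrib, sum_ite_eq']
  omega

lemma card_interedges_lastSlice_add_le (hm : 1 ≤ m) (S : Finset (Fin (m + 1) → Bool)) :
    #((augCube m).interedges (lastSlice S false) (lastSlice S false)ᶜ) +
      #((augCube m).interedges (lastSlice S true) (lastSlice S true)ᶜ) +
      2 * (#(lastSlice S false) - #(lastSlice S true)) +
      2 * (#(lastSlice S true) - #(lastSlice S false)) ≤
    #((augCube (m + 1)).interedges S Sᶜ) := by
  have h01 := two_mul_sub_le_sum_cross hm (lastSlice S false) (lastSlice S true)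
  have h10 := two_mul_sub_le_sum_cross hm (lastSlice S true) (lastSlice S false)
  simp only [card_interedges_eq_sum, sum_eq_sum_lastSlice S, sum_eq_sum_lastSlice Sᶜ,
    lastSlice_compl, augCube_adj_snoc hm, if_true, Bool.true_eq_false, Bool.false_eq_true,
    if_false, sum_add_distrib]
  omega

end LastBit

lemma card_le_two_pow {n : ℕ} (S : Finset (Fin n → Bool)) : #S ≤ 2 ^ n := by
  simpa using card_le_univ S

theorem two_mul_sub_one_le_card_interedges_augCube (n : ℕ) (S : Finset (Fin n → Bool))
    (hS : 0 < #S) (hSc : #S < 2 ^ n) : 2 * n - 1 ≤ #((augCube n).interedges S Sᶜ) := by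
  induction n with
  | zero => omega
  | succ m ih =>
    have hreg := (augCube_isRegularOfDegree (m + 1)).card_mul_le_card_interedges_compl_add S
    by_cases hm : m ≤ 1
    · -- `AQ_1 = K_2` and `AQ_2 = K_4`, where regularity alone gives the bound.
      generalize #S = s at *
      interval_cases m <;> norm_num at hSc <;> interval_cases s <;> omega
    · have hsplit := card_interedges_lastSlice_add_le (by omega) S
      have hcard := card_eq_card_lastSlice_add S
      have ih₀ := ih (lastSlice S false)
      have ih₁ := ih (lastSlice S true)
      have h₀ := card_le_two_pow (lastSlice S false)
      have h₁ := card_le_two_pow (lastSlice S true)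
      have hm2 : m < 2 ^ m := Nat.lt_two_pow_self
      rw [pow_succ] at hSc
      -- two proper nonempty slices give `2 (2m - 1)`; otherwise the cross edges make up for it
      omega

theorem four_mul_sub_four_le_card_interedges_augCube (n : ℕ) (S : Finset (Fin n → Bool))
    (hS : 2 ≤ #S) (hSc : 2 * #S ≤ 2 ^ n) : 4 * n - 4 ≤ #((augCube n).interedges S Sᶜ) := by
  induction n with
  | zero => omega
  | succ m ih =>
    have hreg := (augCube_isRegularOfDegree (m + 1)).card_mul_le_card_interedges_compl_add S
    by_cases h2 : #S = 2
    · rw [h2] at hreg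
      omega
    have hm : 2 ≤ m := by
      by_contra
      interval_cases m <;> omega
    have hsplit := card_interedges_lastSlice_add_le (by omega) S
    have hcard := card_eq_card_lastSlice_add S
    have ec₀ := two_mul_sub_one_le_card_interedges_augCube m (lastSlice S false)
    have ec₁ := two_mul_sub_one_le_card_interedges_augCube m (lastSlice S true)
    have ih₀ := ih (lastSlice S false)
    have ih₁ := ih (lastSlice S true)
    have h2m : 2 * m ≤ 2 ^ m := by
      have : m - 1 < 2 ^ (m - 1) := Nat.lt_two_pow_self
      rw [show m = m - 1 + 1 by omega, pow_succ]
      omega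
    rw [pow_succ] at hSc
    -- each slice is small (induction), proper (edge connectivity) or empty or full
    -- (cross edges)
    omega

lemma augCube_exists_isolating_edge_cut {n : ℕ} (hn : 2 ≤ n) :
    ∃ F : Set (Sym2 (Fin n → Bool)), F ⊆ (augCube n).edgeSet ∧ F.ncard = 4 * n - 4 ∧
      ¬ ((augCube n).deleteEdges F).Connected ∧
      ∀ c : ((augCube n).deleteEdges F).ConnectedComponent, 1 < c.supp.ncard := by
  let i₀ : Fin n := ⟨0, by omega⟩
  let X : Fin n → Bool := fun _ => false
  have adj (w : Fin n → Bool) : (augCube n).Adj w (flipBit i₀ w) :=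
    augCube_adj_iff.2 (Or.inl ⟨i₀, rfl⟩)
  have hz : flipBit ⟨1, hn⟩ X ≠ flipBit i₀ X := fun h =>
    absurd (congrArg Fin.val (flipBit_injective X h)) (by simp [i₀])
  obtain ⟨F, hF⟩ := (augCube n).exists_isolating_edge_cut (adj X) (flipBit_ne _ X) hz
    fun w hwX hwY => ⟨flipBit i₀ w, adj w, fun h => hwY (by rw [← h, flipBit_flipBit]),
      fun h => hwX (by rw [← flipBit_flipBit i₀ w, h, flipBit_flipBit])⟩
  rw [augCube_degree, augCube_degree] at hF
  exact ⟨F, hF.1, by omega, hF.2.2⟩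

/-- For every `n ≥ 2`, the 1-extra edge-connectivity of `AQ_n` equals `4n - 4`: the minimum
cardinality of an edge set `F` such that `AQ_n - F` is disconnected and every connected
component of `AQ_n - F` has more than one vertex equals `4n - 4`. -/
theorem augCube_lambda_one (n : ℕ) (hn : 2 ≤ n) :
    IsLeast {k : ℕ | ∃ F : Set (Sym2 (Fin n → Bool)), F ⊆ (augCube n).edgeSet ∧
      F.ncard = k ∧ ¬ ((augCube n).deleteEdges F).Connected ∧
      ∀ c : ((augCube n).deleteEdges F).ConnectedComponent, 1 < c.supp.ncard} (4 * n - 4) := by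
  refine ⟨augCube_exists_isolating_edge_cut hn, ?_⟩
  rintro k ⟨F, -, rfl, hdisc, hcomp⟩
  refine (augCube n).le_ncard_of_le_card_interedges (fun S hS hSc => ?_) hdisc hcomp
  exact four_mul_sub_four_le_card_interedges_augCube n S hS (by simpa using hSc)
end

section
/- Let n ≥ 3 and let X be a vertex of the augmented cube AQ_n. For 1 ≤ i ≤ n, the set of common neighbors of X and X_i in AQ_n equals {X_2, X̄_2} if i = 1, and equals {X̄_i, X̄_{i−1}} if i > 1. -/
/-! Identify each vertex `Z` with the set `diffSet X Z` of coordinates in which it differs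
from `X`. Then `AQ_n` is the Cayley graph of `(ℤ/2)^n` whose generators are the singletons
`{a}` and the initial segments `Iic a` with `a ≥ 1` (indices from `0`), and `Z` is a common
neighbour of `X` and `X_k` exactly when both `S = diffSet X Z` and `{k} ∆ S` are generators.
Toggling one point never turns a singleton into a singleton, and keeps an initial segment
initial only when the point is its last one or the next one; the four cases leave
`S ∈ {{1}, Iic 1}` for `k = 0` and `S ∈ {Iic k, Iic (k - 1)}` for `k ≥ 1`. -/

namespace AugCube

open Finset

variable {n : ℕ}

def diffSet (X Y : Fin n → Bool) : Finset (Fin n) := {j | X j ≠ Y j}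

def IsGenerator (S : Finset (Fin n)) : Prop :=
  (∃ a, S = {a}) ∨ ∃ a : Fin n, 1 ≤ a.val ∧ S = Iic a

@[simp]
lemma mem_diffSet {X Y : Fin n → Bool} {j : Fin n} : j ∈ diffSet X Y ↔ X j ≠ Y j := by
  simp [diffSet]

lemma diffSet_self (X : Fin n → Bool) : diffSet X X = ∅ := by
  simp [diffSet]

lemma diffSet_flipBit (i : Fin n) (X : Fin n → Bool) : diffSet X (flipBit i X) = {i} := by
  ext j; by_cases h : j = i <;> simp [diffSet, flipBit, h]

lemma diffSet_flipDown (i : Fin n) (X : Fin n → Bool) : diffSet X (flipDown i X) = Iic i := by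
  ext j; by_cases h : j ≤ i <;> simp [diffSet, flipDown, h]

lemma diffSet_flipBit_left (k : Fin n) (X Z : Fin n → Bool) :
    diffSet (flipBit k X) Z = symmDiff {k} (diffSet X Z) := by
  ext j
  simp only [mem_diffSet, mem_symmDiff, mem_singleton, flipBit]
  split_ifs <;> cases X j <;> cases Z j <;> simp_all

lemma diffSet_injective (X : Fin n → Bool) : Function.Injective (diffSet X) := by
  intro Y Y' h
  funext j
  have hj : X j ≠ Y j ↔ X j ≠ Y' j := by rw [← mem_diffSet, h, mem_diffSet]
  revert hj
  cases X j <;> cases Y j <;> cases Y' j <;> decide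

lemma eq_flipBit_iff {i : Fin n} {X Y : Fin n → Bool} :
    Y = flipBit i X ↔ diffSet X Y = {i} := by
  rw [← diffSet_flipBit, (diffSet_injective X).eq_iff]

lemma eq_flipDown_iff {i : Fin n} {X Y : Fin n → Bool} :
    Y = flipDown i X ↔ diffSet X Y = Iic i := by
  rw [← diffSet_flipDown, (diffSet_injective X).eq_iff]

lemma IsGenerator.nonempty {S : Finset (Fin n)} (h : IsGenerator S) : S.Nonempty := by
  rcases h with ⟨a, rfl⟩ | ⟨a, -, rfl⟩
  exacts [singleton_nonempty a, nonempty_Iic]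

lemma adj_iff_isGenerator_diffSet {X Y : Fin n → Bool} :
    (augCube n).Adj X Y ↔ IsGenerator (diffSet X Y) := by
  change X ≠ Y ∧ _ ↔ _
  simp only [IsGenerator, eq_flipBit_iff, eq_flipDown_iff]
  refine ⟨And.right, fun h => ⟨?_, h⟩⟩
  rintro rfl
  simpa [diffSet_self] using IsGenerator.nonempty h

lemma Iic_eq_singleton_of_val_eq_zero {a : Fin n} (ha : a.val = 0) : Iic a = {a} := by
  ext x; simp only [mem_Iic, mem_singleton, Fin.le_def, Fin.ext_iff]; omega

lemma isGenerator_singleton (a : Fin n) : IsGenerator {a} := Or.inl ⟨a, rfl⟩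

lemma isGenerator_Iic (a : Fin n) : IsGenerator (Iic a) := by
  by_cases ha : a.val = 0
  · rw [Iic_eq_singleton_of_val_eq_zero ha]; exact isGenerator_singleton a
  · exact Or.inr ⟨a, by omega, rfl⟩

lemma isGenerator_and_isGenerator_symmDiff_iff_of_val_eq_zero {z o : Fin n} (hz : z.val = 0)
    (ho : o.val = 1) {S : Finset (Fin n)} :
    IsGenerator S ∧ IsGenerator (symmDiff {z} S) ↔ S = {o} ∨ S = Iic o := by
  constructor
  · rintro ⟨hS, hT⟩
    rcases hS with ⟨a, rfl⟩ | ⟨a, ha, rfl⟩ <;>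
      rcases hT with ⟨b, hT⟩ | ⟨b, hb, hT⟩ <;>
      simp only [Finset.ext_iff, Fin.forall_iff, mem_symmDiff, mem_singleton, mem_Iic,
        Fin.ext_iff, Fin.le_def] at hT
    · have := hT _ a.isLt; have := hT _ z.isLt; have := hT _ b.isLt; omega
    · have := hT _ z.isLt; have := hT _ o.isLt; exact Or.inl (congrArg _ (Fin.ext (by omega)))
    · have := hT _ o.isLt; have := hT _ a.isLt; exact Or.inr (congrArg _ (Fin.ext (by omega)))
    · have := hT _ z.isLt; omega
  · rintro (rfl | rfl)
    · refine ⟨isGenerator_singleton o, ?_⟩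
      convert isGenerator_Iic o using 1
      ext x; simp only [mem_symmDiff, mem_singleton, mem_Iic, Fin.ext_iff, Fin.le_def]; omega
    · refine ⟨isGenerator_Iic o, ?_⟩
      convert isGenerator_singleton o using 1
      ext x; simp only [mem_symmDiff, mem_singleton, mem_Iic, Fin.ext_iff, Fin.le_def]; omega

lemma isGenerator_and_isGenerator_symmDiff_iff_of_val_succ {j k : Fin n}
    (hjk : j.val + 1 = k.val) {S : Finset (Fin n)} :
    IsGenerator S ∧ IsGenerator (symmDiff {k} S) ↔ S = Iic k ∨ S = Iic j := by
  constructor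
  · rintro ⟨hS, hT⟩
    rcases hS with ⟨a, rfl⟩ | ⟨a, ha, rfl⟩ <;>
      rcases hT with ⟨b, hT⟩ | ⟨b, hb, hT⟩ <;>
      simp only [Finset.ext_iff, Fin.forall_iff, mem_symmDiff, mem_singleton, mem_Iic,
        Fin.ext_iff, Fin.le_def] at hT
    · have := hT _ a.isLt; have := hT _ k.isLt; have := hT _ b.isLt; omega
    · have := hT 0 (by omega); have := hT 1 (by omega)
      refine Or.inr ?_
      rw [Iic_eq_singleton_of_val_eq_zero (by omega)]
      exact congrArg _ (Fin.ext (by omega))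
    · have := hT 0 (by omega); have := hT 1 (by omega); have := hT _ a.isLt
      exact Or.inl (congrArg _ (Fin.ext (by omega)))
    · have := hT _ k.isLt; have := hT _ a.isLt
      have := hT (a.val + 1)
      have : a = k ∨ a = j := by omega
      exact this.imp (congrArg _) (congrArg _)
  · rintro (rfl | rfl)
    · refine ⟨isGenerator_Iic k, ?_⟩
      convert isGenerator_Iic j using 1
      ext x; simp only [mem_symmDiff, mem_singleton, mem_Iic, Fin.ext_iff, Fin.le_def]; omega
    · refine ⟨isGenerator_Iic j, ?_⟩
      convert isGenerator_Iic k using 1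
      ext x; simp only [mem_symmDiff, mem_singleton, mem_Iic, Fin.ext_iff, Fin.le_def]; omega

lemma adj_and_adj_flipBit_iff {k : Fin n} {X Z : Fin n → Bool} :
    (augCube n).Adj X Z ∧ (augCube n).Adj (flipBit k X) Z ↔
      IsGenerator (diffSet X Z) ∧ IsGenerator (symmDiff {k} (diffSet X Z)) := by
  rw [adj_iff_isGenerator_diffSet, adj_iff_isGenerator_diffSet, diffSet_flipBit_left]

end AugCube

/-- Let `n ≥ 3`, `X` a vertex of `AQ_n` and `1 ≤ i ≤ n` (paper bit `i` is index `i - 1`).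
The common neighbors of `X` and `X_i` are `{X_2, X̄_2}` if `i = 1`, and
`{X̄_i, X̄_(i-1)}` if `i > 1`. -/
theorem augCube_common_neighbors_hypercube_edge (n : ℕ) (hn : 3 ≤ n) (X : Fin n → Bool)
    (i : ℕ) (h2 : i ≤ n) :
    (i = 1 →
      {Z | (augCube n).Adj X Z ∧ (augCube n).Adj (flipBit ⟨i - 1, by omega⟩ X) Z} =
        {flipBit ⟨1, by omega⟩ X, flipDown ⟨1, by omega⟩ X}) ∧
    (1 < i →
      {Z | (augCube n).Adj X Z ∧ (augCube n).Adj (flipBit ⟨i - 1, by omega⟩ X) Z} =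
        {flipDown ⟨i - 1, by omega⟩ X, flipDown ⟨i - 2, by omega⟩ X}) := by
  refine ⟨fun hi => ?_, fun hi => ?_⟩ <;> ext Z <;>
    simp only [Set.mem_ofPred_eq, Set.mem_insert_iff, Set.mem_singleton_iff,
      AugCube.adj_and_adj_flipBit_iff, AugCube.eq_flipBit_iff, AugCube.eq_flipDown_iff]
  · exact AugCube.isGenerator_and_isGenerator_symmDiff_iff_of_val_eq_zero
      (by dsimp only; omega) rfl
  · exact AugCube.isGenerator_and_isGenerator_symmDiff_iff_of_val_succ (by dsimp only; omega)
end

section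
/- For every n ≥ 3, any two distinct vertices of the augmented cube AQ_n have at most four common neighbors. -/
/-! Write `Fin n → Bool` additively (`+` is bitwise xor). Then `AQ_n` is the Cayley graph of this
group with respect to the set `S` of the masks `e_i = flipBitMask i` (bit `i` alone) and
`d_i = flipDownMask i` (bits `0, …, i`, for `i ≥ 1`), so the common neighbours of `X ≠ Y` correspond to the `s ∈ S` with `s + D ∈ S`,
where `D = X + Y ≠ 0`. Let `m` be the top bit of `D`. Exactly one of `s` and `s + D` has bit `m`
set, and the elements of `S` with bit `m` set are `e_m` and the `d_a` with `a ≥ m`. For such `a`,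
`d_a + D ∈ S` forces `a = m`, or `a = m + 1` and `D = d_m`; both cannot happen for the same `D`,
since `d_m + d_m = 0 ∉ S`. So at most one `d_a` qualifies, and every such `s` lies in
`{e_m, d_a, e_m + D, d_a + D}`. -/

instance Pi.booleanRing {ι : Type*} {α : ι → Type*} [∀ i, BooleanRing (α i)] :
    BooleanRing (∀ i, α i) where
  isIdempotentElem f := funext fun i => BooleanRing.mul_self (f i)

open BooleanRing

protected lemma BooleanRing.eq_add_iff_add_eq {R : Type*} [BooleanRing R] {a b c : R} :
    a = b + c ↔ a + b = c := by
  rw [add_comm b c, ← sub_eq_add, eq_sub_iff_add_eq]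

section
variable {n : ℕ}

def flipBitMask (i : Fin n) : Fin n → Bool := fun j => decide (j = i)

def flipDownMask (i : Fin n) : Fin n → Bool := fun j => decide (j ≤ i)

def augCubeGen (n : ℕ) : Set (Fin n → Bool) :=
  Set.range flipBitMask ∪ {p | ∃ i : Fin n, 1 ≤ i.val ∧ p = flipDownMask i}

lemma flipBit_eq_add (i : Fin n) (X : Fin n → Bool) : flipBit i X = X + flipBitMask i := by
  funext j; by_cases h : j = i <;> simp [flipBit, flipBitMask, h, Bool.add_eq_xor]

lemma flipDown_eq_add (i : Fin n) (X : Fin n → Bool) : flipDown i X = X + flipDownMask i := by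
  funext j; by_cases h : j ≤ i <;> simp [flipDown, flipDownMask, h, Bool.add_eq_xor]

lemma zero_notMem_augCubeGen : (0 : Fin n → Bool) ∉ augCubeGen n := by
  rintro (⟨i, hi⟩ | ⟨i, -, hi⟩)
  · simpa [flipBitMask] using congrFun hi i
  · simpa [flipDownMask] using congrFun hi i

lemma augCube_adj_iff_s8 (X Z : Fin n → Bool) : (augCube n).Adj X Z ↔ Z + X ∈ augCubeGen n := by
  have hgen : Z + X ∈ augCubeGen n ↔
      (∃ i, Z + X = flipBitMask i) ∨ ∃ i : Fin n, 1 ≤ i.val ∧ Z + X = flipDownMask i := by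
    simp only [augCubeGen, Set.mem_union, Set.mem_range, Set.mem_ofPred_eq, eq_comm (b := Z + X)]
  simp only [augCube, flipBit_eq_add, flipDown_eq_add, BooleanRing.eq_add_iff_add_eq, ← hgen,
    and_iff_right_iff_imp]
  rintro h rfl
  exact zero_notMem_augCubeGen (by rwa [add_self] at h)

def IsTopBit (D : Fin n → Bool) (m : Fin n) : Prop :=
  D m = true ∧ ∀ j, D j = true → j ≤ m

lemma exists_isTopBit {D : Fin n → Bool} (hD : D ≠ 0) : ∃ m, IsTopBit D m := by
  obtain ⟨j, hj⟩ : ∃ j, D j = true := by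
    by_contra! h
    exact hD (funext fun j => by simpa [Bool.zero_eq_false] using h j)
  obtain ⟨m, hm, hmax⟩ := (Finset.univ.filter (D · = true)).exists_max_image id ⟨j, by simpa⟩
  exact ⟨m, by simpa using hm, fun i hi => hmax i (by simpa)⟩

lemma eq_flipBitMask_or_flipDownMask_of_apply_eq_true {s : Fin n → Bool} {m : Fin n}
    (hs : s ∈ augCubeGen n) (hsm : s m = true) :
    s = flipBitMask m ∨ ∃ a, 1 ≤ a.val ∧ m ≤ a ∧ s = flipDownMask a := by
  rcases hs with ⟨i, rfl⟩ | ⟨a, ha, rfl⟩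
  · obtain rfl : m = i := by simpa [flipBitMask] using hsm
    exact Or.inl rfl
  · exact Or.inr ⟨a, ha, by simpa [flipDownMask] using hsm, rfl⟩

lemma eq_or_eq_flipDownMask_of_flipDownMask_add_mem {D : Fin n → Bool} {m a : Fin n}
    (hD : IsTopBit D m) (hma : m ≤ a) (h : flipDownMask a + D ∈ augCubeGen n) :
    a = m ∨ (a.val = m.val + 1 ∧ D = flipDownMask m) := by
  obtain ⟨hm, hmax⟩ := hD
  rw [or_iff_not_imp_left]
  intro ham
  have hDa : D a = false := by
    by_contra! h
    exact ham (le_antisymm (hmax a (by simpa using h)) hma)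
  have hlt : m < a := lt_of_le_of_ne hma (Ne.symm ham)
  rcases h with ⟨c, hc⟩ | ⟨c, -, hc⟩
  · have hD : D = flipDownMask a + flipBitMask c :=
      BooleanRing.eq_add_iff_add_eq.2 ((add_comm D _).trans hc.symm)
    have hDj : ∀ j, D j = (decide (j ≤ a) ^^ decide (j = c)) := fun j => congrFun hD j
    obtain rfl : a = c := by simpa using (hDj a).symm.trans hDa
    have hval : a.val = m.val + 1 := by
      by_contra hne
      have := hmax ⟨m.val + 1, by omega⟩ (by rw [hDj]; simp [Fin.le_def, Fin.ext_iff]; omega)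
      simp [Fin.le_def] at this
    refine ⟨hval, funext fun j => ?_⟩
    rw [hDj, flipDownMask, Bool.eq_iff_iff]
    simp only [Bool.xor_iff_ne, ne_eq, decide_eq_decide, decide_eq_true_eq, Fin.le_def,
      Fin.ext_iff]
    omega
  · have hD : D = flipDownMask a + flipDownMask c :=
      BooleanRing.eq_add_iff_add_eq.2 ((add_comm D _).trans hc)
    have hDj : ∀ j, D j = (decide (j ≤ a) ^^ decide (j ≤ c)) := fun j => congrFun hD j
    have hac : a ≤ c := by simpa using (hDj a).symm.trans hDa
    have := (hDj m).symm.trans hm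
    simp [hma, hma.trans hac] at this

lemma eq_of_flipDownMask_add_mem {D : Fin n → Bool} {m a b : Fin n} (hD : IsTopBit D m)
    (hma : m ≤ a) (hmb : m ≤ b) (ha : flipDownMask a + D ∈ augCubeGen n)
    (hb : flipDownMask b + D ∈ augCubeGen n) : a = b := by
  have h0 : D = flipDownMask m → flipDownMask m + D ∉ augCubeGen n := by
    rintro rfl
    rw [add_self]
    exact zero_notMem_augCubeGen
  rcases eq_or_eq_flipDownMask_of_flipDownMask_add_mem hD hma ha with rfl | ⟨ha', hDa⟩ <;>
    rcases eq_or_eq_flipDownMask_of_flipDownMask_add_mem hD hmb hb with rfl | ⟨hb', hDb⟩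
  · rfl
  · exact (h0 hDb ha).elim
  · exact (h0 hDa hb).elim
  · exact Fin.ext (ha'.trans hb'.symm)

lemma ncard_setOf_mem_augCubeGen_add_mem_le_four {D : Fin n → Bool} (hD : D ≠ 0) :
    {s | s ∈ augCubeGen n ∧ s + D ∈ augCubeGen n}.ncard ≤ 4 := by
  obtain ⟨m, hm⟩ := exists_isTopBit hD
  obtain ⟨a, ha⟩ : ∃ a, ∀ b, m ≤ b → flipDownMask b + D ∈ augCubeGen n → b = a := by
    by_cases h : ∃ a, m ≤ a ∧ flipDownMask a + D ∈ augCubeGen n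
    · obtain ⟨a, hma, hA⟩ := h
      exact ⟨a, fun b hmb hB => eq_of_flipDownMask_add_mem hm hmb hma hB hA⟩
    · exact ⟨m, fun b hmb hB => (h ⟨b, hmb, hB⟩).elim⟩
  have of_apply_top : ∀ s, s ∈ augCubeGen n → s + D ∈ augCubeGen n → s m = true →
      s = flipBitMask m ∨ s = flipDownMask a := by
    intro s hs hsD hsm
    rcases eq_flipBitMask_or_flipDownMask_of_apply_eq_true hs hsm with h | ⟨b, -, hmb, rfl⟩
    · exact Or.inl h
    · exact Or.inr (by rw [ha b hmb hsD])
  have hsub : {s | s ∈ augCubeGen n ∧ s + D ∈ augCubeGen n} ⊆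
      ↑({flipBitMask m, flipDownMask a, flipBitMask m + D, flipDownMask a + D} : Finset _) := by
    rintro s ⟨hs, hsD⟩
    cases hsm : s m
    · have hss : s + D + D = s := by rw [add_assoc, add_self, add_zero]
      have htop : (s + D) m = true := by simp [hsm, hm.1, Bool.add_eq_xor]
      rcases of_apply_top (s + D) hsD (by rwa [hss]) htop with h | h <;>
        rw [← hss, h] <;> simp
    · rcases of_apply_top s hs hsD hsm with rfl | rfl <;> simp
  calc _ ≤ _ := Set.ncard_le_ncard hsub (Finset.finite_toSet _)
    _ = _ := Set.ncard_coe_finset _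
    _ ≤ 4 := Finset.card_le_four

lemma augCube_commonNeighbors_eq_preimage (X Y : Fin n → Bool) :
    (augCube n).commonNeighbors X Y =
      (· + X) ⁻¹' {s | s ∈ augCubeGen n ∧ s + (X + Y) ∈ augCubeGen n} := by
  ext Z
  rw [Set.mem_preimage, Set.mem_ofPred_eq, ← add_assoc, add_assoc Z, add_self, add_zero]
  exact Iff.and (augCube_adj_iff_s8 X Z) (augCube_adj_iff_s8 Y Z)

end

theorem augCube_common_neighbors_le_four_general (n : ℕ) (X Y : Fin n → Bool)
    (hne : X ≠ Y) :
    {Z | (augCube n).Adj X Z ∧ (augCube n).Adj Y Z}.ncard ≤ 4 := by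
  change ((augCube n).commonNeighbors X Y).ncard ≤ 4
  rw [augCube_commonNeighbors_eq_preimage, Set.ncard_preimage_of_injective_subset_range
    (add_left_injective X) fun Z _ => add_right_surjective X Z]
  exact ncard_setOf_mem_augCubeGen_add_mem_le_four (by rwa [Ne, BooleanRing.add_eq_zero'])

/-- For every `n ≥ 3`, any two distinct vertices of `AQ_n` have at most four common
neighbors. -/
theorem augCube_common_neighbors_le_four (n : ℕ) (hn : 3 ≤ n) (X Y : Fin n → Bool)
    (hne : X ≠ Y) :
    {Z | (augCube n).Adj X Z ∧ (augCube n).Adj Y Z}.ncard ≤ 4 :=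
  augCube_common_neighbors_le_four_general n X Y hne
end

section
/- Let n ≥ 5, let X and Y be adjacent vertices of the augmented cube AQ_n, let Z = X̄_n (with Y ≠ Z), so that P = (Y, X, Z) is a path of length two, and let U be a vertex of N_{AQ_n}(P). Then |N_{AQ_n}({U, X, Y, Z})| ≥ 8n − 29, where N_{AQ_n}({U, X, Y, Z}) is the set of vertices outside {U, X, Y, Z} adjacent to at least one of U, X, Y, Z. -/
/-
`AQ_n` is the Cayley graph of `(ℤ/2)ⁿ` (with `∆` as the group law) for the generators
`e_i = singleMask i` (bit `i`) and `D_i = lowMask i` (the bits `≤ i`), so every vertex has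
`2n - 1` neighbours, and `v ≠ w` have as many common neighbours as there are generators `a`
with `(v ∆ w) ∆ a` again a generator. If `d = a ∆ b` with generators `a, b` and `t` is the top
bit of `d`, then `a` or `b` is `e_t` or `D_t`, unless `d = D_t` and `{a, b} = {e_{t+1}, D_{t+1}}`;
hence there are at most four common neighbours, and at most two for several special `d`, among
them `X ∆ Z = ⊤`. A case analysis shows that one more of the six pairs in `{U, X, Y, Z}` has at
most two common neighbours, so by Bonferroni
`|N({U, X, Y, Z})| ≥ 4 (2n - 1) - (4 · 4 + 2 + 2) - 4 = 8n - 28`.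
-/

open scoped symmDiff
open Finset

theorem Finset.card_add_card_add_card_add_card_le {α : Type*} [DecidableEq α]
    (A B C D : Finset α) :
    #A + #B + #C + #D ≤ #(A ∪ B ∪ C ∪ D) +
      (#(A ∩ B) + #(A ∩ C) + #(A ∩ D) + #(B ∩ C) + #(B ∩ D) + #(C ∩ D)) := by
  have hAB := card_union_add_card_inter A B
  have hABC := card_union_add_card_inter (A ∪ B) C
  have hABCD := card_union_add_card_inter (A ∪ B ∪ C) D
  have hC : #((A ∪ B) ∩ C) ≤ #(A ∩ C) + #(B ∩ C) := by
    rw [union_inter_distrib_right]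
    exact card_union_le _ _
  have hD : #((A ∪ B ∪ C) ∩ D) ≤ #(A ∩ D) + #(B ∩ D) + #(C ∩ D) := by
    rw [union_inter_distrib_right, union_inter_distrib_right]
    exact (card_union_le _ _).trans (Nat.add_le_add_right (card_union_le _ _) _)
  omega

namespace AugCube

variable {n : ℕ}

def singleMask (i : ℕ) : Fin n → Bool := fun j => decide (j.val = i)

def lowMask (i : ℕ) : Fin n → Bool := fun j => decide (j.val ≤ i)

@[simp] lemma singleMask_apply (i : ℕ) (j : Fin n) : singleMask i j = decide (j.val = i) := rfl

@[simp] lemma lowMask_apply (i : ℕ) (j : Fin n) : lowMask i j = decide (j.val ≤ i) := rfl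

lemma lowMask_zero : lowMask 0 = (singleMask 0 : Fin n → Bool) := by
  ext j; simp

lemma singleMask_eq_bot {i : ℕ} (h : n ≤ i) : singleMask i = (⊥ : Fin n → Bool) := by
  ext j; simp; omega

lemma lowMask_eq_top {i : ℕ} (h : n ≤ i + 1) : lowMask i = (⊤ : Fin n → Bool) := by
  ext j; simp; omega

lemma lowMask_symmDiff_singleMask_succ (i : ℕ) :
    lowMask i ∆ singleMask (i + 1) = (lowMask (i + 1) : Fin n → Bool) := by
  ext j; rw [Bool.eq_iff_iff]; simp; omega

lemma flipBit_eq_symmDiff (i : Fin n) (X : Fin n → Bool) : flipBit i X = X ∆ singleMask i := by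
  ext j; by_cases h : j = i <;> simp [flipBit, h, Fin.val_inj]

lemma flipDown_eq_symmDiff (i : Fin n) (X : Fin n → Bool) : flipDown i X = X ∆ lowMask i := by
  ext j; by_cases h : j ≤ i <;> simp [flipDown, h]

-- Admitting `lowMask 0 = singleMask 0` makes the condition `1 ≤ i` in `augCube` disappear.
def gens (n : ℕ) : Finset (Fin n → Bool) :=
  univ.image (fun i : Fin n => singleMask i) ∪ univ.image (fun i : Fin n => lowMask i)

lemma mem_gens {a : Fin n → Bool} :
    a ∈ gens n ↔ ∃ i : Fin n, a = singleMask i ∨ a = lowMask i := by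
  simp [gens, eq_comm, exists_or]

lemma bot_notMem_gens : (⊥ : Fin n → Bool) ∉ gens n := by
  rw [mem_gens]
  rintro ⟨i, h | h⟩ <;> simpa using congrFun h i

lemma singleMask_injective :
    Function.Injective (fun i : Fin n => (singleMask i : Fin n → Bool)) := by
  intro i k h
  simpa [Fin.val_inj] using congrFun h i

lemma lowMask_injective : Function.Injective (fun i : Fin n => (lowMask i : Fin n → Bool)) := by
  intro i k h
  have hi := congrFun h i
  have hk := congrFun h k
  simp at hi hk
  omega

lemma image_singleMask_inter_image_lowMask (hn : 0 < n) :
    univ.image (fun i : Fin n => (singleMask i : Fin n → Bool)) ∩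
      univ.image (fun i : Fin n => lowMask i) = {singleMask 0} := by
  ext a
  simp only [mem_inter, mem_image, mem_univ, true_and, mem_singleton]
  constructor
  · rintro ⟨⟨i, rfl⟩, ⟨k, hk⟩⟩
    have h0 := congrFun hk ⟨0, hn⟩
    simp only [lowMask_apply, zero_le, decide_true, singleMask_apply] at h0
    simp [← of_decide_eq_true h0.symm]
  · rintro rfl
    exact ⟨⟨⟨0, hn⟩, rfl⟩, ⟨⟨0, hn⟩, lowMask_zero⟩⟩

lemma card_gens (hn : 0 < n) : #(gens n) = 2 * n - 1 := by
  have h := card_union_add_card_inter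
    (univ.image (fun i : Fin n => (singleMask i : Fin n → Bool)))
    (univ.image (fun i : Fin n => lowMask i))
  rw [image_singleMask_inter_image_lowMask hn, card_image_of_injective _ singleMask_injective,
    card_image_of_injective _ lowMask_injective, card_singleton, card_univ, Fintype.card_fin] at h
  rw [gens]
  omega

lemma augCube_adj_iff {X Y : Fin n → Bool} : (augCube n).Adj X Y ↔ X ∆ Y ∈ gens n := by
  have hY : ∀ a, Y = X ∆ a ↔ X ∆ Y = a := fun a => by
    constructor <;> rintro rfl <;> simp
  simp only [augCube, flipBit_eq_symmDiff, flipDown_eq_symmDiff, hY]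
  constructor
  · rintro ⟨-, ⟨i, h⟩ | ⟨i, -, h⟩⟩ <;> exact mem_gens.2 ⟨i, by simp [h]⟩
  · intro h
    refine ⟨fun hXY => bot_notMem_gens (by rwa [hXY, symmDiff_self] at h), ?_⟩
    obtain ⟨i, h | h⟩ := mem_gens.1 h
    · exact .inl ⟨i, h⟩
    · rcases Nat.eq_zero_or_pos i with h0 | h0
      · exact .inl ⟨i, by rw [h, h0, lowMask_zero]⟩
      · exact .inr ⟨i, h0, h⟩

instance : DecidableRel (augCube n).Adj := fun _ _ => decidable_of_iff _ augCube_adj_iff.symm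

lemma neighborFinset_augCube (X : Fin n → Bool) :
    (augCube n).neighborFinset X = (gens n).image (X ∆ ·) := by
  ext W
  rw [SimpleGraph.mem_neighborFinset, augCube_adj_iff, mem_image]
  constructor
  · exact fun h => ⟨X ∆ W, h, symmDiff_symmDiff_cancel_left X W⟩
  · rintro ⟨a, ha, rfl⟩
    rwa [symmDiff_symmDiff_cancel_left]

lemma card_neighborFinset_augCube (hn : 0 < n) (X : Fin n → Bool) :
    #((augCube n).neighborFinset X) = 2 * n - 1 := by
  rw [neighborFinset_augCube, card_image_of_injective _ (symmDiff_right_injective X), card_gens hn]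

def commonGens (d : Fin n → Bool) : Finset (Fin n → Bool) :=
  (gens n).filter (fun a => d ∆ a ∈ gens n)

lemma mem_commonGens {d a : Fin n → Bool} :
    a ∈ commonGens d ↔ a ∈ gens n ∧ d ∆ a ∈ gens n :=
  mem_filter

lemma card_neighborFinset_inter (v w : Fin n → Bool) :
    #((augCube n).neighborFinset v ∩ (augCube n).neighborFinset w) = #(commonGens (v ∆ w)) := by
  have h : (augCube n).neighborFinset v ∩ (augCube n).neighborFinset w =
      (commonGens (v ∆ w)).image (v ∆ ·) := by
    ext W
    simp only [SimpleGraph.mem_neighborFinset, mem_inter, augCube_adj_iff, mem_image,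
      mem_commonGens]
    constructor
    · rintro ⟨hv, hw⟩
      refine ⟨v ∆ W, ⟨hv, ?_⟩, symmDiff_symmDiff_cancel_left v W⟩
      rwa [symmDiff_symmDiff_symmDiff_comm, symmDiff_self, bot_symmDiff]
    · rintro ⟨a, ⟨ha, hwa⟩, rfl⟩
      rw [symmDiff_symmDiff_cancel_left, symmDiff_left_comm, ← symmDiff_assoc]
      exact ⟨ha, hwa⟩
  rw [h, card_image_of_injective _ (symmDiff_right_injective v)]

lemma isGreatest_singleMask (i : Fin n) : IsGreatest {j | singleMask i j = true} i :=
  ⟨by simp, fun _ hj => (Fin.ext (of_decide_eq_true hj)).le⟩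

lemma isGreatest_lowMask (i : Fin n) : IsGreatest {j | lowMask i j = true} i :=
  ⟨by simp, fun _ hj => Fin.le_def.2 (of_decide_eq_true hj)⟩

lemma exists_isGreatest {d : Fin n → Bool} (hd : d ≠ ⊥) :
    ∃ t, IsGreatest {j | d j = true} t := by
  obtain ⟨j, hj⟩ := Function.ne_iff.1 hd
  have hne : (univ.filter (fun k => d k = true)).Nonempty := ⟨j, by simpa using hj⟩
  exact ⟨_, by simpa using isGreatest_max' _ hne⟩

lemma exists_isGreatest_of_mem_gens {a : Fin n → Bool} (ha : a ∈ gens n) :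
    ∃ i : Fin n, (a = singleMask i ∨ a = lowMask i) ∧ IsGreatest {j | a j = true} i := by
  obtain ⟨i, h | h⟩ := mem_gens.1 ha <;> subst h
  exacts [⟨i, .inl rfl, isGreatest_singleMask i⟩, ⟨i, .inr rfl, isGreatest_lowMask i⟩]

lemma isGreatest_symmDiff_of_lt {a b : Fin n → Bool} {i k : Fin n}
    (ha : IsGreatest {j | a j = true} i) (hb : IsGreatest {j | b j = true} k) (hik : i < k) :
    IsGreatest {j | (a ∆ b) j = true} k := by
  have hak : a k = false := by
    by_contra h
    exact (ha.2 (by simpa using h)).not_gt hik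
  have hbk : b k = true := hb.1
  refine ⟨by simp [Pi.symmDiff_apply, hak, hbk], fun j hj => ?_⟩
  by_cases hbj : b j = true
  · exact hb.2 hbj
  · have haj : a j = true := by simpa [Pi.symmDiff_apply, hbj] using hj
    exact (ha.2 haj).trans hik.le

lemma singleMask_symmDiff_lowMask_of_isGreatest {i t : Fin n}
    (ht : IsGreatest {j | (singleMask i ∆ lowMask i) j = true} t) :
    (i : ℕ) = t + 1 ∧ singleMask i ∆ lowMask i = (lowMask t : Fin n → Bool) := by
  have hlt : ∀ j : Fin n, (singleMask i ∆ lowMask i) j = true ↔ (j : ℕ) < i := fun j => by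
    simp [Pi.symmDiff_apply]; omega
  have hti : (t : ℕ) < i := (hlt t).1 ht.1
  have hit : (i : ℕ) = t + 1 := by
    by_contra h
    have := ht.2 ((hlt ⟨t + 1, by omega⟩).2 (by simp; omega))
    simp [Fin.le_def] at this
  refine ⟨hit, funext fun j => ?_⟩
  rw [Bool.eq_iff_iff, hlt]
  simp
  omega

lemma eq_lowMask_of_isGreatest_of_same_top {d a : Fin n → Bool} {i t : Fin n}
    (ht : IsGreatest {j | d j = true} t) (ha : a = singleMask i ∨ a = lowMask i)
    (hb : d ∆ a = singleMask i ∨ d ∆ a = lowMask i) :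
    d = lowMask t ∧ (a = singleMask (t + 1) ∨ a = d ∆ singleMask (t + 1)) := by
  have hd : d = singleMask i ∆ lowMask i := by
    have hd0 : d ≠ ⊥ := fun h => by simpa [h] using ht.1
    have key : d = a ∆ (d ∆ a) := by rw [symmDiff_left_comm, symmDiff_self, symmDiff_bot]
    rcases ha with rfl | rfl <;> rcases hb with h | h <;> rw [h] at key
    · exact absurd (key.trans (symmDiff_self _)) hd0
    · exact key
    · exact key.trans (symmDiff_comm _ _)
    · exact absurd (key.trans (symmDiff_self _)) hd0
  obtain ⟨hit, hD⟩ := singleMask_symmDiff_lowMask_of_isGreatest (hd ▸ ht)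
  rw [hd, hD, lowMask_symmDiff_singleMask_succ, ← hit]
  exact ⟨rfl, ha⟩

theorem commonGens_subset {d : Fin n → Bool} {t : Fin n} (ht : IsGreatest {j | d j = true} t) :
    commonGens d ⊆ {singleMask t, d ∆ singleMask t} ∪
      if d = lowMask t then {singleMask (t + 1), d ∆ singleMask (t + 1)}
      else {lowMask t, d ∆ lowMask t} := by
  intro a ha
  obtain ⟨ha, hb⟩ := mem_commonGens.1 ha
  obtain ⟨i, hai, hi⟩ := exists_isGreatest_of_mem_gens ha
  obtain ⟨k, hbk, hk⟩ := exists_isGreatest_of_mem_gens hb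
  rcases lt_trichotomy i k with hik | rfl | hki
  · have hk' := isGreatest_symmDiff_of_lt hi hk hik
    rw [symmDiff_left_comm, symmDiff_self, symmDiff_bot] at hk'
    obtain rfl : k = t := hk'.unique ht
    rw [← symmDiff_symmDiff_cancel_left d a]
    rcases hbk with h | h <;> rw [h]
    · simp
    · split_ifs with hdk
      · rw [← hdk, symmDiff_eq_left] at h
        exact absurd (h ▸ ha) bot_notMem_gens
      · simp
  · obtain ⟨hdt, h | h⟩ := eq_lowMask_of_isGreatest_of_same_top ht hai hbk <;>
      simp [if_pos hdt, h]
  · have hi' := isGreatest_symmDiff_of_lt hk hi hki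
    rw [symmDiff_symmDiff_cancel_right] at hi'
    obtain rfl : i = t := hi'.unique ht
    rcases hai with rfl | rfl
    · simp
    · split_ifs with hdi
      · rw [hdi, symmDiff_self] at hb
        exact absurd hb bot_notMem_gens
      · simp

lemma symmDiff_mem_commonGens_iff {d a : Fin n → Bool} :
    d ∆ a ∈ commonGens d ↔ a ∈ commonGens d := by
  rw [mem_commonGens, mem_commonGens, symmDiff_symmDiff_cancel_left, and_comm]

lemma commonGens_subset_of_notMem {d c : Fin n → Bool} {B : Finset (Fin n → Bool)}
    (h : commonGens d ⊆ {c, d ∆ c} ∪ B) (hc : c ∉ commonGens d) : commonGens d ⊆ B := by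
  intro a ha
  rcases mem_union.1 (h ha) with h' | h'
  · rcases mem_insert.1 h' with rfl | h'
    · exact absurd ha hc
    · rw [mem_singleton.1 h', symmDiff_mem_commonGens_iff] at ha
      exact absurd ha hc
  · exact h'

lemma card_commonGens_le_four {d : Fin n → Bool} (hd : d ≠ ⊥) : #(commonGens d) ≤ 4 := by
  obtain ⟨t, ht⟩ := exists_isGreatest hd
  refine (card_le_card (commonGens_subset ht)).trans ((card_union_le _ _).trans ?_)
  split_ifs <;> exact add_le_add card_le_two card_le_two

lemma card_commonGens_le_two_of_notMem {d : Fin n → Bool} {t : Fin n}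
    (ht : IsGreatest {j | d j = true} t) (h : d ∆ singleMask t ∉ gens n) :
    #(commonGens d) ≤ 2 := by
  have hsub := commonGens_subset_of_notMem (commonGens_subset ht)
    (fun h' => h (mem_commonGens.1 h').2)
  refine (card_le_card hsub).trans ?_
  split_ifs <;> exact card_le_two

lemma card_commonGens_singleMask_le_two (i : Fin n) :
    #(commonGens (singleMask i : Fin n → Bool)) ≤ 2 :=
  card_commonGens_le_two_of_notMem (isGreatest_singleMask i)
    (by rw [symmDiff_self]; exact bot_notMem_gens)

lemma card_commonGens_top_le_two (hn : 0 < n) : #(commonGens (⊤ : Fin n → Bool)) ≤ 2 := by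
  have htop : lowMask (n - 1) = (⊤ : Fin n → Bool) := lowMask_eq_top (by omega)
  have hsub := commonGens_subset (htop ▸ isGreatest_lowMask ⟨n - 1, by omega⟩)
  rw [if_pos htop.symm, union_comm] at hsub
  refine (card_le_card (commonGens_subset_of_notMem hsub ?_)).trans card_le_two
  rw [singleMask_eq_bot (by simp; omega)]
  exact fun h => bot_notMem_gens (mem_commonGens.1 h).1

lemma card_commonGens_le_two_of_apply_last (hn : 0 < n) {d : Fin n → Bool}
    (hd : d ⟨n - 1, by omega⟩ = true) (h : d ∆ singleMask (n - 1) ∉ gens n) :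
    #(commonGens d) ≤ 2 :=
  card_commonGens_le_two_of_notMem ⟨hd, fun j _ => Fin.le_def.2 (by simp; omega)⟩ h

lemma notMem_gens_of_le_of_ne {v : Fin n → Bool} {j₀ j₁ j₂ : Fin n} (h₀₁ : j₀ ≤ j₁) (h₁₂ : j₁ ≠ j₂)
    (h₀ : v j₀ = false) (h₁ : v j₁ = true) (h₂ : v j₂ = true) : v ∉ gens n := by
  rw [mem_gens]
  rintro ⟨i, rfl | rfl⟩
  · simp only [singleMask_apply, decide_eq_true_eq] at h₁ h₂
    exact h₁₂ (Fin.ext (h₁.trans h₂.symm))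
  · simp only [lowMask_apply, decide_eq_true_eq, decide_eq_false_iff_not] at h₀ h₁
    exact h₀ ((Fin.le_def.1 h₀₁).trans h₁)

lemma card_commonGens_lowMask_symmDiff_top_le_two {m : ℕ} (hm : m + 4 ≤ n) :
    #(commonGens (lowMask m ∆ ⊤ : Fin n → Bool)) ≤ 2 := by
  refine card_commonGens_le_two_of_apply_last (by omega) (by simp [Pi.symmDiff_apply]; omega) ?_
  refine notMem_gens_of_le_of_ne (j₀ := ⟨0, by omega⟩) (j₁ := ⟨m + 1, by omega⟩)
    (j₂ := ⟨m + 2, by omega⟩) (Fin.le_def.2 (by simp)) (by simp) ?_ ?_ ?_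
  all_goals simp only [Pi.symmDiff_apply]; simp; omega

lemma card_commonGens_lowMask_symmDiff_lowMask_symmDiff_top_le_two {m q : ℕ} (hmq : m < q)
    (hq : q + 3 ≤ n) : #(commonGens (lowMask q ∆ lowMask m ∆ ⊤ : Fin n → Bool)) ≤ 2 := by
  refine card_commonGens_le_two_of_apply_last (by omega) (by simp [Pi.symmDiff_apply]; omega) ?_
  refine notMem_gens_of_le_of_ne (j₀ := ⟨m + 1, by omega⟩) (j₁ := ⟨q + 1, by omega⟩)
    (j₂ := ⟨0, by omega⟩) (Fin.le_def.2 (by simp; omega)) (by simp) ?_ ?_ ?_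
  all_goals simp only [Pi.symmDiff_apply]; simp; omega

lemma eq_lowMask_of_two_lt_card_commonGens (hn : 5 ≤ n) {v : Fin n → Bool} (hv : v ∈ gens n)
    (hvt : v ≠ ⊤) (h₁ : 2 < #(commonGens v)) (h₂ : 2 < #(commonGens (v ∆ ⊤))) :
    v = lowMask (n - 3) := by
  obtain ⟨i, rfl | rfl⟩ := mem_gens.1 hv
  · exact absurd (card_commonGens_singleMask_le_two i) h₁.not_ge
  · have hi : (i : ℕ) + 2 ≤ n := by
      by_contra h
      exact hvt (lowMask_eq_top (by omega))
    rcases (by omega : (i : ℕ) = n - 3 ∨ (i : ℕ) = n - 2 ∨ (i : ℕ) + 4 ≤ n) with h | h | h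
    · rw [h]
    · have he : lowMask i ∆ ⊤ = (singleMask (n - 1) : Fin n → Bool) := by
        ext j; rw [Bool.eq_iff_iff]; simp only [Pi.symmDiff_apply]; simp; omega
      rw [he] at h₂
      exact absurd (card_commonGens_singleMask_le_two (⟨n - 1, by omega⟩ : Fin n)) h₂.not_ge
    · exact absurd (card_commonGens_lowMask_symmDiff_top_le_two h) h₂.not_ge

theorem exists_card_commonGens_le_two (hn : 5 ≤ n) {y u : Fin n → Bool} (hy : y ∈ gens n)
    (hyt : y ≠ ⊤) (hu : u ≠ ⊥) (huy : u ≠ y) (hut : u ≠ ⊤)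
    (hadj : u ∈ gens n ∨ y ∆ u ∈ gens n ∨ u ∆ ⊤ ∈ gens n) :
    #(commonGens y) ≤ 2 ∨ #(commonGens (y ∆ ⊤)) ≤ 2 ∨ #(commonGens u) ≤ 2 ∨
      #(commonGens (u ∆ ⊤)) ≤ 2 ∨ #(commonGens (y ∆ u)) ≤ 2 := by
  by_contra! h
  obtain ⟨h₁, h₂, h₃, h₄, h₅⟩ := h
  obtain rfl := eq_lowMask_of_two_lt_card_commonGens hn hy hyt h₁ h₂
  rcases hadj with hu' | hu' | hu'
  · exact huy (eq_lowMask_of_two_lt_card_commonGens hn hu' hut h₃ h₄)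
  · obtain ⟨i, hi | hi⟩ := mem_gens.1 hu'
    · rw [hi] at h₅
      exact absurd (card_commonGens_singleMask_le_two i) h₅.not_ge
    · have hui : u = lowMask (n - 3) ∆ lowMask i := by rw [← hi, symmDiff_symmDiff_cancel_left]
      rcases (by omega : (i : ℕ) = n - 3 ∨ (i : ℕ) = n - 2 ∨ (i : ℕ) = n - 1 ∨ (i : ℕ) + 4 ≤ n)
        with h | h | h | h
      · exact hu (by rw [hui, h, symmDiff_self])
      · have he : u = singleMask (n - 2) := by
          rw [hui, h]
          ext j; rw [Bool.eq_iff_iff]; simp only [Pi.symmDiff_apply]; simp; omega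
        rw [he] at h₃
        exact absurd (card_commonGens_singleMask_le_two (⟨n - 2, by omega⟩ : Fin n))
          h₃.not_ge
      · rw [hi, h, lowMask_eq_top (by omega)] at h₅
        exact absurd (card_commonGens_top_le_two (by omega)) h₅.not_ge
      · rw [hui] at h₄
        exact absurd (card_commonGens_lowMask_symmDiff_lowMask_symmDiff_top_le_two
          (by omega) (by omega)) h₄.not_ge
  · have hu'' : u ∆ ⊤ = lowMask (n - 3) := by
      refine eq_lowMask_of_two_lt_card_commonGens hn hu' ?_ h₄ ?_
      · rwa [Ne, symmDiff_eq_right]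
      · rwa [symmDiff_symmDiff_cancel_right]
    rw [← hu'', symmDiff_symmDiff_self'] at h₅
    exact absurd (card_commonGens_top_le_two (by omega)) h₅.not_ge

lemma four_mul_le_ncard_neighborhood_add (hn : 0 < n) (U X Y Z : Fin n → Bool) :
    4 * (2 * n - 1) ≤ {W | W ∉ ({U, X, Y, Z} : Set (Fin n → Bool)) ∧
      ((augCube n).Adj U W ∨ (augCube n).Adj X W ∨ (augCube n).Adj Y W ∨
        (augCube n).Adj Z W)}.ncard + 4 +
      (#((augCube n).neighborFinset U ∩ (augCube n).neighborFinset X) +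
        #((augCube n).neighborFinset U ∩ (augCube n).neighborFinset Y) +
        #((augCube n).neighborFinset U ∩ (augCube n).neighborFinset Z) +
        #((augCube n).neighborFinset X ∩ (augCube n).neighborFinset Y) +
        #((augCube n).neighborFinset X ∩ (augCube n).neighborFinset Z) +
        #((augCube n).neighborFinset Y ∩ (augCube n).neighborFinset Z)) := by
  set N := (augCube n).neighborFinset
  have hset : {W | W ∉ ({U, X, Y, Z} : Set (Fin n → Bool)) ∧
      ((augCube n).Adj U W ∨ (augCube n).Adj X W ∨ (augCube n).Adj Y W ∨
        (augCube n).Adj Z W)} = ↑((N U ∪ N X ∪ N Y ∪ N Z) \ {U, X, Y, Z}) := by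
    ext W
    simp [N, and_comm]
  rw [hset, Set.ncard_coe_finset]
  have hunion := card_add_card_add_card_add_card_le (N U) (N X) (N Y) (N Z)
  have hsdiff := card_le_card_sdiff_add_card (s := N U ∪ N X ∪ N Y ∪ N Z) (t := {U, X, Y, Z})
  have h4 : #({U, X, Y, Z} : Finset _) ≤ 4 := card_le_four
  simp only [N, card_neighborFinset_augCube hn] at hunion hsdiff ⊢
  omega

lemma card_neighborFinset_inter_le_four {v w : Fin n → Bool} (h : v ≠ w) :
    #((augCube n).neighborFinset v ∩ (augCube n).neighborFinset w) ≤ 4 := by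
  rw [card_neighborFinset_inter]
  exact card_commonGens_le_four (by rwa [Ne, symmDiff_eq_bot])

lemma card_neighborFinset_inter_symmDiff_top_le_two (hn : 0 < n) (v : Fin n → Bool) :
    #((augCube n).neighborFinset v ∩ (augCube n).neighborFinset (v ∆ ⊤)) ≤ 2 := by
  rw [card_neighborFinset_inter, symmDiff_symmDiff_cancel_left]
  exact card_commonGens_top_le_two hn

theorem exists_card_neighborFinset_inter_le_two (hn : 5 ≤ n) {X Y U : Fin n → Bool}
    (hXY : (augCube n).Adj X Y) (hYZ : Y ≠ X ∆ ⊤) (hUX : U ≠ X) (hUY : U ≠ Y)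
    (hUZ : U ≠ X ∆ ⊤)
    (hadj : (augCube n).Adj X U ∨ (augCube n).Adj Y U ∨ (augCube n).Adj (X ∆ ⊤) U) :
    #((augCube n).neighborFinset X ∩ (augCube n).neighborFinset Y) ≤ 2 ∨
      #((augCube n).neighborFinset Y ∩ (augCube n).neighborFinset (X ∆ ⊤)) ≤ 2 ∨
      #((augCube n).neighborFinset U ∩ (augCube n).neighborFinset X) ≤ 2 ∨
      #((augCube n).neighborFinset U ∩ (augCube n).neighborFinset (X ∆ ⊤)) ≤ 2 ∨
      #((augCube n).neighborFinset U ∩ (augCube n).neighborFinset Y) ≤ 2 := by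
  have hZ : ∀ V, V ∆ (X ∆ ⊤) = X ∆ V ∆ ⊤ := fun V => by
    rw [← symmDiff_assoc, symmDiff_comm V X]
  have hUY' : U ∆ Y = X ∆ Y ∆ (X ∆ U) := by
    rw [symmDiff_symmDiff_symmDiff_comm, symmDiff_self, bot_symmDiff, symmDiff_comm]
  simp only [card_neighborFinset_inter, hZ, symmDiff_comm U X, hUY']
  refine exists_card_commonGens_le_two hn (augCube_adj_iff.1 hXY) ?_ ?_ ?_ ?_ ?_
  · exact fun h => hYZ (by rw [← h, symmDiff_symmDiff_cancel_left])
  · exact fun h => hUX (by rw [← symmDiff_eq_bot, symmDiff_comm, h])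
  · exact fun h => hUY (symmDiff_right_injective X h)
  · exact fun h => hUZ (by rw [← h, symmDiff_symmDiff_cancel_left])
  · simp only [augCube_adj_iff, symmDiff_right_comm X ⊤ U] at hadj
    rwa [symmDiff_symmDiff_symmDiff_comm, symmDiff_self, bot_symmDiff]

end AugCube

open AugCube in
/-- Let `n ≥ 5`, let `X`, `Y` be adjacent vertices of `AQ_n`, let `Z = X̄_n` (with
`Y ≠ Z`), so that `P = (Y, X, Z)` is a path of length two, and let `U` be a vertex of
`N(P)`.  Then `|N({U, X, Y, Z})| ≥ 8n - 29`. -/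
theorem augCube_four_neighborhood_lower_top (n : ℕ) (hn : 5 ≤ n) (X Y Z U : Fin n → Bool)
    (hYX : (augCube n).Adj Y X) (hZ : Z = flipDown ⟨n - 1, by omega⟩ X) (hYZ : Y ≠ Z)
    (hU : U ∉ ({X, Y, Z} : Set (Fin n → Bool)) ∧
      ((augCube n).Adj X U ∨ (augCube n).Adj Y U ∨ (augCube n).Adj Z U)) :
    8 * n - 29 ≤ {W | W ∉ ({U, X, Y, Z} : Set (Fin n → Bool)) ∧
      ((augCube n).Adj U W ∨ (augCube n).Adj X W ∨ (augCube n).Adj Y W ∨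
        (augCube n).Adj Z W)}.ncard := by
  obtain ⟨hU, hUadj⟩ := hU
  simp only [Set.mem_insert_iff, Set.mem_singleton_iff, not_or] at hU
  obtain ⟨hUX, hUY, hUZ⟩ := hU
  obtain rfl : Z = X ∆ ⊤ := by rw [hZ, flipDown_eq_symmDiff, lowMask_eq_top (by simp; omega)]
  have hcount := four_mul_le_ncard_neighborhood_add (by omega) U X Y (X ∆ ⊤)
  have hUX' := card_neighborFinset_inter_le_four hUX
  have hUY' := card_neighborFinset_inter_le_four hUY
  have hUZ' := card_neighborFinset_inter_le_four hUZ
  have hXY' := card_neighborFinset_inter_le_four hYX.ne'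
  have hYZ' := card_neighborFinset_inter_le_four hYZ
  have hXZ' := card_neighborFinset_inter_symmDiff_top_le_two (by omega) X
  rcases exists_card_neighborFinset_inter_le_two hn hYX.symm hYZ hUX hUY hUZ hUadj with
    h | h | h | h | h <;> omega
end
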